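/- arXiv:math/0503741 — 8 statements merged into one kernel-verified Lean document; each statement's English description precedes it below -/
import Mathlib

section
/- Let α ∈ (0,2), p ≥ 2, H ∈ (1/α − 1/p, 1/α + 1/p) and t > 0. Then ∫_0^t K_{H,α}(t,s)^p ds = C_{H,α,p} · t^{p(H−1/α)+1}, where C_{H,α,p} = c_{H,α}^p ∫_0^1 v^{p(1/α − H)} [(1−v)^{H−1/α} − (H−1/α) ∫_v^1 w^{H−1/α−1}(w−v)^{H−1/α} dw]^p dv. -/
open MeasureTheory Real Set

/-- The constant `c_{H,α}` with `G = H - 1/α + 1/2`. -/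
noncomputable def cK (H α : ℝ) : ℝ :=
  ((H - 1/α + 1/2) * (1 - 2*(H - 1/α + 1/2)) * Real.Gamma (1/2 - (H - 1/α + 1/2)) /
    (Real.Gamma (2 - 2*(H - 1/α + 1/2)) * Real.Gamma ((H - 1/α + 1/2) + 1/2))) ^ ((1:ℝ)/2)

/-- The Volterra kernel `K_{H,α}(t,s)`. -/
noncomputable def volK (H α t s : ℝ) : ℝ :=
  if 0 < s ∧ s ≤ t then
    cK H α * ((t/s) ^ (H - 1/α) * (t - s) ^ (H - 1/α)
      - (H - 1/α) * s ^ (1/α - H) * ∫ u in s..t, u ^ (H - 1/α - 1) * (u - s) ^ (H - 1/α))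
  else 0

lemma mul_rpow_left {x : ℝ} (y p : ℝ) (hx : 0 ≤ x) : (x * y) ^ p = x ^ p * y ^ p := by
  rcases hx.eq_or_lt with h | h
  · rcases eq_or_ne p 0 with hp | hp
    · simp [← h, hp]
    · simp [← h, Real.zero_rpow hp]
  · rcases lt_trichotomy y 0 with hy | hy | hy
    · rw [Real.rpow_def_of_neg (mul_neg_of_pos_of_neg h hy), Real.rpow_def_of_neg hy,
        Real.log_mul h.ne' hy.ne, Real.rpow_def_of_pos h, add_mul, Real.exp_add]
      ring
    · subst hy
      rcases eq_or_ne p 0 with hp | hp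
      · simp [hp]
      · simp [Real.zero_rpow hp]
    · exact Real.mul_rpow h.le hy.le

lemma cK_nonneg (H α : ℝ) : 0 ≤ cK H α := by
  unfold cK
  set x : ℝ := (H - 1/α + 1/2) * (1 - 2*(H - 1/α + 1/2)) * Real.Gamma (1/2 - (H - 1/α + 1/2)) /
    (Real.Gamma (2 - 2*(H - 1/α + 1/2)) * Real.Gamma ((H - 1/α + 1/2) + 1/2)) with hx
  rcases le_or_gt 0 x with hx0 | hx0
  · exact Real.rpow_nonneg hx0 _
  · rw [Real.rpow_def_of_neg hx0,
      show (1:ℝ)/2 * Real.pi = Real.pi / 2 by ring, Real.cos_pi_div_two, mul_zero]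

theorem stmt1 (α H t p : ℝ) (hα : α ∈ Set.Ioo (0:ℝ) 2) (hp : 2 ≤ p)
    (hH : H ∈ Set.Ioo (1/α - 1/p) (1/α + 1/p)) (ht : 0 < t) :
    ∫ s in (0:ℝ)..t, (volK H α t s) ^ p =
      (cK H α ^ p * ∫ v in (0:ℝ)..1, v ^ (p * (1/α - H)) *
          ((1 - v) ^ (H - 1/α) - (H - 1/α) *
            ∫ w in v..1, w ^ (H - 1/α - 1) * (w - v) ^ (H - 1/α)) ^ p) *
        t ^ (p * (H - 1/α) + 1) := by
  set κ : ℝ := H - 1/α with hκ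
  -- change of variables s = t * v
  have hsub := intervalIntegral.smul_integral_comp_mul_left
    (a := 0) (b := 1) (fun s => (volK H α t s) ^ p) t
  simp only [mul_zero, mul_one] at hsub
  rw [← hsub]
  -- pointwise equality on (0, 1]
  have key : ∀ v ∈ Set.Ioc (0:ℝ) 1,
      (volK H α t (t * v)) ^ p =
      cK H α ^ p * t ^ (κ * p) * (v ^ (p * (1/α - H)) *
          ((1 - v) ^ κ - κ * ∫ w in v..1, w ^ (κ - 1) * (w - v) ^ κ) ^ p) := by
    intro v hv
    obtain ⟨hv0, hv1⟩ := hv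
    have htv : 0 < t * v := mul_pos ht hv0
    rw [volK, if_pos ⟨htv, by nlinarith⟩]
    simp only [← hκ]
    set I : ℝ := ∫ w in v..1, w ^ (κ - 1) * (w - v) ^ κ with hI
    -- inner integral substitution u = t * w
    have hJ := intervalIntegral.smul_integral_comp_mul_left
      (a := v) (b := 1) (fun u => u ^ (κ - 1) * (u - t*v) ^ κ) t
    simp only [mul_one] at hJ
    have hJ2 : (∫ w in v..1, (t*w) ^ (κ - 1) * (t*w - t*v) ^ κ)
        = ∫ w in v..1, (t ^ (κ - 1) * t ^ κ) * (w ^ (κ - 1) * (w - v) ^ κ) := by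
      apply intervalIntegral.integral_congr_ae
      filter_upwards with w hw
      rw [Set.uIoc_of_le hv1] at hw
      rw [Real.mul_rpow ht.le (hv0.trans hw.1).le,
        show t*w - t*v = t*(w - v) by ring,
        Real.mul_rpow ht.le (by linarith [hw.1] : (0:ℝ) ≤ w - v)]
      ring
    have hTT : t * t ^ (κ - 1) = t ^ κ := by
      nth_rewrite 1 [← Real.rpow_one t]
      rw [← Real.rpow_add ht, show (1:ℝ) + (κ - 1) = κ by ring]
    have hJ' : (∫ u in t*v..t, u ^ (κ - 1) * (u - t*v) ^ κ) = t ^ κ * t ^ κ * I := by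
      rw [← hJ, hJ2, intervalIntegral.integral_const_mul, smul_eq_mul,
        show t * (t ^ (κ - 1) * t ^ κ * I) = (t * t ^ (κ - 1)) * t ^ κ * I by ring, hTT]
    have e0 : 1/α - H = -κ := by rw [hκ]; ring
    have e1 : t / (t * v) = 1 / v := by
      rw [div_eq_div_iff (by positivity) hv0.ne']
      ring
    have e2 : ((1:ℝ) / v) ^ κ = v ^ (-κ) := by
      rw [one_div, Real.inv_rpow hv0.le, ← Real.rpow_neg hv0.le]
    have e3 : (t - t*v) ^ κ = t ^ κ * (1 - v) ^ κ := by
      rw [show t - t*v = t*(1 - v) by ring, Real.mul_rpow ht.le (by linarith)]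
    have e4 : (t*v) ^ (-κ) = t ^ (-κ) * v ^ (-κ) := Real.mul_rpow ht.le hv0.le
    have hT2 : t ^ (-κ) * (t ^ κ * t ^ κ) = t ^ κ := by
      rw [← Real.rpow_add ht, ← Real.rpow_add ht, show -κ + (κ + κ) = κ by ring]
    have main : cK H α * ((t/(t*v)) ^ κ * (t - t*v) ^ κ
        - κ * (t*v) ^ (1/α - H) * ∫ u in t*v..t, u ^ (κ - 1) * (u - t*v) ^ κ)
        = cK H α * (t ^ κ * (v ^ (-κ) * ((1 - v) ^ κ - κ * I))) := by
      rw [e1, e2, e3, e0, e4, hJ']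
      linear_combination (-(cK H α) * κ * v ^ (-κ) * I) * hT2
    rw [main, mul_rpow_left _ _ (cK_nonneg H α),
      mul_rpow_left _ _ (Real.rpow_nonneg ht.le κ),
      mul_rpow_left _ _ (Real.rpow_nonneg hv0.le (-κ)),
      ← Real.rpow_mul ht.le, ← Real.rpow_mul hv0.le,
      show -κ * p = p * (1/α - H) by rw [hκ]; ring]
    ring
  have hcongr : (∫ v in (0:ℝ)..1, (volK H α t (t * v)) ^ p)
      = ∫ v in (0:ℝ)..1, cK H α ^ p * t ^ (κ * p) * (v ^ (p * (1/α - H)) *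
          ((1 - v) ^ κ - κ * ∫ w in v..1, w ^ (κ - 1) * (w - v) ^ κ) ^ p) := by
    apply intervalIntegral.integral_congr_ae
    filter_upwards with v hv
    rw [Set.uIoc_of_le zero_le_one] at hv
    exact key v hv
  rw [hcongr, intervalIntegral.integral_const_mul, smul_eq_mul,
    show p * κ + 1 = κ * p + 1 by ring, Real.rpow_add ht, Real.rpow_one]
  ring
end

section
/- Let α ∈ (0,2), H ∈ (1/α, 1/α + 1/2) and t > 0. Then lim_{s → 0⁺} s^{H−1/α} K_{H,α}(t,s) = (c_{H,α}/2) t^{2(H−1/α)}; in particular K_{H,α}(t,s) is asymptotically equivalent to (c_{H,α}/2) t^{2(H−1/α)} s^{1/α−H} as s ↓ 0. -/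
open MeasureTheory Real Set

theorem stmt5 (α H t : ℝ) (hα : α ∈ Set.Ioo (0:ℝ) 2)
    (hH : H ∈ Set.Ioo (1/α) (1/α + 1/2)) (ht : 0 < t) :
    Filter.Tendsto (fun s => s ^ (H - 1/α) * volK H α t s)
      (nhdsWithin 0 (Set.Ioi 0))
      (nhds (cK H α / 2 * t ^ (2 * (H - 1/α)))) := by
  obtain ⟨hα0, -⟩ := hα
  obtain ⟨hH1, hH2⟩ := hH
  have hγ0 : 0 < H - 1/α := by linarith
  set γ : ℝ := H - 1/α with hγdef
  have h2γ : (0:ℝ) < 2*γ := by linarith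
  set c : ℝ := cK H α with hc
  set F : ℝ → ℝ → ℝ := fun s u => (Set.Ioc s t).indicator (fun u => u ^ (γ-1) * (u-s) ^ γ) u
    with hF
  set bound : ℝ → ℝ := fun u => (Set.Ioc (0:ℝ) t).indicator (fun u => u ^ (2*γ-1)) u with hb
  have hbnn : ∀ u, 0 ≤ bound u := by
    intro u
    simp only [hb]
    by_cases hu : u ∈ Set.Ioc (0:ℝ) t
    · rw [Set.indicator_of_mem hu]
      exact Real.rpow_nonneg hu.1.le _
    · rw [Set.indicator_of_notMem hu]
  -- integrability of the bound
  have hbint : Integrable bound := by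
    simp only [hb]
    rw [integrable_indicator_iff measurableSet_Ioc]
    have := (intervalIntegral.intervalIntegrable_rpow' (a := 0) (b := t)
      (r := 2*γ-1) (by linarith))
    rwa [intervalIntegrable_iff_integrableOn_Ioc_of_le ht.le] at this
  have hmeas : ∀ᶠ s in nhdsWithin 0 (Set.Ioi 0), AEStronglyMeasurable (F s) volume := by
    filter_upwards with s
    simp only [hF]
    apply AEStronglyMeasurable.indicator _ measurableSet_Ioc
    apply Measurable.aestronglyMeasurable
    fun_prop
  have hbd : ∀ᶠ s in nhdsWithin 0 (Set.Ioi 0), ∀ᵐ u, ‖F s u‖ ≤ bound u := by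
    filter_upwards [self_mem_nhdsWithin] with s hs
    filter_upwards with u
    simp only [hF, hb]
    by_cases hu : u ∈ Set.Ioc s t
    · rw [Set.indicator_of_mem hu]
      have hu0 : 0 < u := lt_trans hs hu.1
      have hus : 0 ≤ u - s := by linarith [hu.1.le]
      have h1 : (0:ℝ) ≤ u ^ (γ-1) := Real.rpow_nonneg hu0.le _
      have h2 : (0:ℝ) ≤ (u-s) ^ γ := Real.rpow_nonneg hus _
      rw [Real.norm_eq_abs, abs_of_nonneg (mul_nonneg h1 h2)]
      have hmem : u ∈ Set.Ioc (0:ℝ) t := ⟨hu0, hu.2⟩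
      rw [Set.indicator_of_mem hmem]
      have h3 : (u-s) ^ γ ≤ u ^ γ :=
        Real.rpow_le_rpow hus (by have := Set.mem_Ioi.mp hs; linarith) hγ0.le
      calc u ^ (γ-1) * (u-s) ^ γ ≤ u ^ (γ-1) * u ^ γ :=
            mul_le_mul_of_nonneg_left h3 h1
        _ = u ^ (2*γ-1) := by
            rw [← Real.rpow_add hu0]; ring_nf
    · rw [Set.indicator_of_notMem hu]
      simpa using hbnn u
  have hlim : ∀ᵐ u, Filter.Tendsto (fun s => F s u) (nhdsWithin 0 (Set.Ioi 0))
      (nhds (bound u)) := by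
    filter_upwards with u
    by_cases hu : u ∈ Set.Ioc (0:ℝ) t
    · have hu0 : 0 < u := hu.1
      have hev : ∀ᶠ s in nhdsWithin 0 (Set.Ioi 0),
          F s u = u ^ (γ-1) * (u-s) ^ γ := by
        filter_upwards [Ioo_mem_nhdsGT hu0]
          with s hs
        simp only [hF]
        exact Set.indicator_of_mem (show u ∈ Set.Ioc s t from ⟨hs.2, hu.2⟩) _
      have hsub : Filter.Tendsto (fun s : ℝ => u - s) (nhdsWithin 0 (Set.Ioi 0))
          (nhds u) := by
        have hcont : Continuous (fun s : ℝ => u - s) := by fun_prop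
        have h := (hcont.tendsto 0).mono_left (nhdsWithin_le_nhds (s := Set.Ioi 0))
        simpa using h
      have h1 : Filter.Tendsto (fun s : ℝ => (u-s) ^ γ) (nhdsWithin 0 (Set.Ioi 0))
          (nhds (u ^ γ)) :=
        ((Real.continuousAt_rpow_const u γ (Or.inl hu0.ne')).tendsto).comp hsub
      have h2 : Filter.Tendsto (fun s => u ^ (γ-1) * (u-s) ^ γ)
          (nhdsWithin 0 (Set.Ioi 0)) (nhds (u ^ (γ-1) * u ^ γ)) :=
        h1.const_mul _
      have heq : u ^ (γ-1) * u ^ γ = bound u := by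
        simp only [hb]
        rw [Set.indicator_of_mem hu, ← Real.rpow_add hu0]; ring_nf
      rw [← heq]
      exact h2.congr' (by filter_upwards [hev] with s hs; exact hs.symm)
    · have h0 : bound u = 0 := by
        simp only [hb]; exact Set.indicator_of_notMem hu _
      rw [h0]
      have hev : ∀ᶠ s in nhdsWithin 0 (Set.Ioi 0), F s u = 0 := by
        filter_upwards [self_mem_nhdsWithin] with s hs
        simp only [hF]
        apply Set.indicator_of_notMem
        intro hmem
        exact hu ⟨lt_trans hs hmem.1, hmem.2⟩
      exact Filter.Tendsto.congr' (by filter_upwards [hev] with s hs; exact hs.symm)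
        tendsto_const_nhds
  have hDCT := MeasureTheory.tendsto_integral_filter_of_dominated_convergence
    (μ := volume) bound hmeas hbd hbint hlim
  have hval : ∫ u, bound u = t ^ (2*γ) / (2*γ) := by
    simp only [hb]
    rw [MeasureTheory.integral_indicator measurableSet_Ioc,
      ← intervalIntegral.integral_of_le ht.le,
      integral_rpow (Or.inl (by linarith : (-1:ℝ) < 2*γ-1))]
    rw [Real.zero_rpow (by linarith : 2*γ-1+1 ≠ 0)]
    ring_nf
  rw [hval] at hDCT
  have hKey : ∀ᶠ s in nhdsWithin 0 (Set.Ioi 0),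
      s ^ γ * volK H α t s = c * (t ^ γ * (t-s) ^ γ - γ * ∫ u, F s u) := by
    filter_upwards [Ioo_mem_nhdsGT ht] with s hs
    have hs0 : 0 < s := hs.1
    have hst : s < t := hs.2
    have hint_eq : (∫ u, F s u) = ∫ u in s..t, u ^ (γ-1) * (u-s) ^ γ := by
      simp only [hF]
      rw [MeasureTheory.integral_indicator measurableSet_Ioc,
        ← intervalIntegral.integral_of_le hst.le]
    rw [hint_eq, volK, if_pos ⟨hs0, hst.le⟩]
    have h1 : s ^ γ * (t/s) ^ γ = t ^ γ := by
      rw [Real.div_rpow ht.le hs0.le, mul_div_assoc', mul_comm,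
        mul_div_assoc, div_self (ne_of_gt (Real.rpow_pos_of_pos hs0 γ)), mul_one]
    have h2 : s ^ γ * s ^ (1/α - H) = 1 := by
      rw [← Real.rpow_add hs0]
      have hz : γ + (1/α - H) = 0 := by rw [hγdef]; ring
      rw [hz, Real.rpow_zero]
    calc s ^ γ * (c * ((t/s) ^ γ * (t - s) ^ γ -
          γ * s ^ (1/α - H) * ∫ u in s..t, u ^ (γ - 1) * (u - s) ^ γ))
        = c * ((s ^ γ * (t/s) ^ γ) * (t - s) ^ γ -
          γ * (s ^ γ * s ^ (1/α - H)) * ∫ u in s..t, u ^ (γ - 1) * (u - s) ^ γ) := by ring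
      _ = c * (t ^ γ * (t-s) ^ γ - γ * ∫ u in s..t, u ^ (γ-1) * (u-s) ^ γ) := by
          rw [h1, h2, mul_one]
  have hts : Filter.Tendsto (fun s : ℝ => (t-s) ^ γ) (nhdsWithin 0 (Set.Ioi 0))
      (nhds (t ^ γ)) := by
    have hsub : Filter.Tendsto (fun s : ℝ => t - s) (nhdsWithin 0 (Set.Ioi 0))
        (nhds t) := by
      have hcont : Continuous (fun s : ℝ => t - s) := by fun_prop
      have h := (hcont.tendsto 0).mono_left (nhdsWithin_le_nhds (s := Set.Ioi 0))
      simpa using h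
    exact ((Real.continuousAt_rpow_const t γ (Or.inl ht.ne')).tendsto).comp hsub
  have hfinal : Filter.Tendsto (fun s => c * (t ^ γ * (t-s) ^ γ - γ * ∫ u, F s u))
      (nhdsWithin 0 (Set.Ioi 0))
      (nhds (c * (t ^ γ * t ^ γ - γ * (t ^ (2*γ) / (2*γ))))) :=
    (((hts.const_mul (t ^ γ)).sub (hDCT.const_mul γ)).const_mul c)
  have heqlim : c * (t ^ γ * t ^ γ - γ * (t ^ (2*γ) / (2*γ))) = c / 2 * t ^ (2*γ) := by
    rw [← Real.rpow_add ht, (by ring : γ + γ = 2*γ)]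
    have hne : (γ:ℝ) ≠ 0 := ne_of_gt hγ0
    field_simp
    ring
  rw [heqlim] at hfinal
  exact hfinal.congr' (by filter_upwards [hKey] with s hs; exact hs.symm)
end

section
/- Let α ∈ (0,2), H ∈ (1/α − 1/2, 1/α) and t > 0. Then both boundary asymptotics hold: (a) lim_{s → t⁻} (t−s)^{1/α−H} K_{H,α}(t,s) = c_{H,α}; (b) lim_{s → 0⁺} s^{1/α−H} K_{H,α}(t,s) = c_{H,α}(1/α − H) ∫_1^∞ v^{H−1/α−1}(v−1)^{H−1/α} dv. In particular K_{H,α}(t,·) is unbounded near both endpoints 0 and t. -/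
open MeasureTheory Real Set Filter Topology

/-- abstract version of the kernel -/
noncomputable def myK (c γ t s : ℝ) : ℝ :=
  if 0 < s ∧ s ≤ t then
    c * ((t/s) ^ γ * (t - s) ^ γ
      - γ * s ^ (-γ) * ∫ u in s..t, u ^ (γ - 1) * (u - s) ^ γ)
  else 0

lemma volK_eq_myK (H α t s : ℝ) : volK H α t s = myK (cK H α) (H - 1/α) t s := by
  rw [volK, myK, show 1/α - H = -(H - 1/α) by ring]

section aux

variable {γ t s : ℝ}

lemma measurable_g : Measurable fun v : ℝ => v ^ (γ - 1) * (v - s) ^ γ := by fun_prop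

lemma aux_intInt (hγ0 : -1 < γ) (hγ1 : γ < 0) (hs : 0 < s) (hst : s ≤ t) :
    IntervalIntegrable (fun u => u ^ (γ - 1) * (u - s) ^ γ) volume s t := by
  have hbase : IntervalIntegrable (fun u => (u - s) ^ γ) volume s t := by
    have h := (intervalIntegral.intervalIntegrable_rpow' (a := 0) (b := t - s) hγ0).comp_sub_right s
    simpa using h
  refine (hbase.const_mul (s ^ (γ - 1))).mono_fun' ?_ ?_
  · exact measurable_g.aestronglyMeasurable
  · rw [uIoc_of_le hst]
    filter_upwards [ae_restrict_mem measurableSet_Ioc] with u hu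
    have hu0 : 0 < u := hs.trans hu.1
    have hus : 0 ≤ u - s := by linarith [hu.1]
    rw [Real.norm_eq_abs, abs_of_nonneg (mul_nonneg (Real.rpow_nonneg hu0.le _)
      (Real.rpow_nonneg hus _))]
    exact mul_le_mul_of_nonneg_right
      (Real.rpow_le_rpow_of_nonpos hs hu.1.le (by linarith)) (Real.rpow_nonneg hus _)

lemma aux_nonneg (hs : 0 < s) (hst : s ≤ t) :
    0 ≤ ∫ u in s..t, u ^ (γ - 1) * (u - s) ^ γ := by
  refine intervalIntegral.integral_nonneg hst fun u hu => ?_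
  exact mul_nonneg (Real.rpow_nonneg (by linarith [hu.1]) _)
    (Real.rpow_nonneg (by linarith [hu.1]) _)

lemma aux_bound (hγ0 : -1 < γ) (hγ1 : γ < 0) (hs : 0 < s) (hst : s ≤ t) :
    (∫ u in s..t, u ^ (γ - 1) * (u - s) ^ γ)
      ≤ s ^ (γ - 1) * ((t - s) ^ (γ + 1) / (γ + 1)) := by
  have hbase : IntervalIntegrable (fun u => s ^ (γ - 1) * (u - s) ^ γ) volume s t := by
    have h := (intervalIntegral.intervalIntegrable_rpow' (a := 0) (b := t - s) hγ0).comp_sub_right s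
    simpa using (show IntervalIntegrable (fun u => (u - s) ^ γ) volume s t by
      simpa using h).const_mul (s ^ (γ - 1))
  have h1 : (∫ u in s..t, u ^ (γ - 1) * (u - s) ^ γ)
      ≤ ∫ u in s..t, s ^ (γ - 1) * (u - s) ^ γ := by
    refine intervalIntegral.integral_mono_on hst (aux_intInt hγ0 hγ1 hs hst) hbase
      fun u hu => ?_
    exact mul_le_mul_of_nonneg_right
      (Real.rpow_le_rpow_of_nonpos hs hu.1 (by linarith))
      (Real.rpow_nonneg (by linarith [hu.1]) _)
  have h2 : (∫ u in s..t, s ^ (γ - 1) * (u - s) ^ γ)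
      = s ^ (γ - 1) * ((t - s) ^ (γ + 1) / (γ + 1)) := by
    rw [intervalIntegral.integral_const_mul]
    congr 1
    rw [show (fun u => (u - s) ^ γ) = fun u => (fun x => x ^ γ) (u - s) from rfl,
      intervalIntegral.integral_comp_sub_right (fun x => x ^ γ) s,
      integral_rpow (Or.inl hγ0)]
    rw [sub_self, Real.zero_rpow (by linarith)]
    ring
  exact h1.trans_eq h2

end aux

lemma tendsto_a {γ t : ℝ} (hγ0 : -(1:ℝ)/2 < γ) (hγ1 : γ < 0) (ht : 0 < t) (c : ℝ) :
    Tendsto (fun s => (t - s) ^ (-γ) * myK c γ t s) (𝓝[<] t) (𝓝 c) := by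
  have hγ0' : -1 < γ := by linarith
  have hmem : Ioo 0 t ∈ 𝓝[<] t := Ioo_mem_nhdsLT_of_mem ⟨ht, le_refl t⟩
  set I : ℝ → ℝ := fun s => ∫ u in s..t, u ^ (γ - 1) * (u - s) ^ γ with hI
  set E : ℝ → ℝ := fun s => (t - s) ^ (-γ) * s ^ (-γ) * I s with hE
  have hEq : ∀ s ∈ Ioo (0:ℝ) t,
      (t - s) ^ (-γ) * myK c γ t s = c * ((t/s) ^ γ - γ * E s) := by
    intro s hs
    have hts : (0:ℝ) < t - s := by linarith [hs.2]
    have h1 : (t - s) ^ (-γ) * (t - s) ^ γ = 1 := by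
      rw [← Real.rpow_add hts]; simp
    rw [myK, if_pos ⟨hs.1, hs.2.le⟩]
    calc (t - s) ^ (-γ) * (c * ((t/s) ^ γ * (t - s) ^ γ - γ * s ^ (-γ) * I s))
        = c * ((t/s) ^ γ * ((t - s) ^ (-γ) * (t - s) ^ γ)
            - γ * ((t - s) ^ (-γ) * s ^ (-γ) * I s)) := by ring
      _ = c * ((t/s) ^ γ - γ * E s) := by rw [h1]; ring
  have hE0 : Tendsto E (𝓝[<] t) (𝓝 0) := by
    have hg : Tendsto (fun s => (t - s) * s⁻¹ / (γ + 1)) (𝓝[<] t) (𝓝 0) := by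
      have : Tendsto (fun s : ℝ => (t - s) * s⁻¹ / (γ + 1)) (𝓝 t) (𝓝 ((t - t) * t⁻¹ / (γ + 1))) := by
        exact (((tendsto_const_nhds.sub tendsto_id).mul (tendsto_inv₀ ht.ne')).div_const _)
      simpa using this.mono_left nhdsWithin_le_nhds
    refine squeeze_zero' ?_ ?_ hg
    · filter_upwards [hmem] with s hs
      exact mul_nonneg (mul_nonneg (Real.rpow_nonneg (by linarith [hs.2]) _)
        (Real.rpow_nonneg hs.1.le _)) (aux_nonneg hs.1 hs.2.le)
    · filter_upwards [hmem] with s hs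
      have hts : (0:ℝ) < t - s := by linarith [hs.2]
      have hb := aux_bound (γ := γ) (t := t) hγ0' hγ1 hs.1 hs.2.le
      have hnn : 0 ≤ (t - s) ^ (-γ) * s ^ (-γ) :=
        mul_nonneg (Real.rpow_nonneg hts.le _) (Real.rpow_nonneg hs.1.le _)
      calc E s = (t - s) ^ (-γ) * s ^ (-γ) * I s := rfl
        _ ≤ (t - s) ^ (-γ) * s ^ (-γ) * (s ^ (γ - 1) * ((t - s) ^ (γ + 1) / (γ + 1))) :=
            mul_le_mul_of_nonneg_left hb hnn
        _ = ((t - s) ^ (-γ) * (t - s) ^ (γ + 1)) * (s ^ (-γ) * s ^ (γ - 1)) / (γ + 1) := by ring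
        _ = (t - s) * s⁻¹ / (γ + 1) := by
            rw [← Real.rpow_add hts, ← Real.rpow_add hs.1,
              show -γ + (γ + 1) = 1 by ring, show -γ + (γ - 1) = -1 by ring,
              Real.rpow_one, Real.rpow_neg_one]
  have hq : Tendsto (fun s => (t/s) ^ γ) (𝓝[<] t) (𝓝 1) := by
    have hdiv : Tendsto (fun s => t / s) (𝓝[<] t) (𝓝 1) := by
      have : Tendsto (fun s : ℝ => t / s) (𝓝 t) (𝓝 (t / t)) :=
        tendsto_const_nhds.div tendsto_id ht.ne'
      rw [div_self ht.ne'] at this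
      exact this.mono_left nhdsWithin_le_nhds
    have hc : ContinuousAt (fun x : ℝ => x ^ γ) 1 :=
      Real.continuousAt_rpow_const 1 γ (Or.inl one_ne_zero)
    simpa [Real.one_rpow, Function.comp_def] using hc.tendsto.comp hdiv
  have hmain : Tendsto (fun s => c * ((t/s) ^ γ - γ * E s)) (𝓝[<] t) (𝓝 (c * (1 - γ * 0))) :=
    tendsto_const_nhds.mul (hq.sub (tendsto_const_nhds.mul hE0))
  have : Tendsto (fun s => c * ((t/s) ^ γ - γ * E s)) (𝓝[<] t) (𝓝 c) := by
    simpa using hmain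
  exact this.congr' (by filter_upwards [hmem] with s hs; exact (hEq s hs).symm)

lemma g_integrable {γ : ℝ} (hγ0 : -(1:ℝ)/2 < γ) (hγ1 : γ < 0) :
    IntegrableOn (fun v : ℝ => v ^ (γ - 1) * (v - 1) ^ γ) (Ioi 1) := by
  have hγ0' : -1 < γ := by linarith
  rw [← Ioc_union_Ioi_eq_Ioi (show (1:ℝ) ≤ 2 by norm_num)]
  refine IntegrableOn.union ?_ ?_
  · have hbase : IntegrableOn (fun v : ℝ => (v - 1) ^ γ) (Ioc 1 2) := by
      have h : IntervalIntegrable (fun v : ℝ => (v - 1) ^ γ) volume 1 2 := by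
        have := (intervalIntegral.intervalIntegrable_rpow' (a := 0) (b := 1) hγ0').comp_sub_right 1
        norm_num at this; exact this
      rwa [intervalIntegrable_iff_integrableOn_Ioc_of_le (by norm_num)] at h
    refine hbase.mono' measurable_g.aestronglyMeasurable ?_
    filter_upwards [ae_restrict_mem measurableSet_Ioc] with v hv
    have hv1 : (0:ℝ) ≤ v - 1 := by linarith [hv.1]
    rw [Real.norm_eq_abs, abs_of_nonneg (mul_nonneg (Real.rpow_nonneg (by linarith [hv.1]) _)
      (Real.rpow_nonneg hv1 _))]
    have : v ^ (γ - 1) ≤ 1 :=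
      Real.rpow_le_one_of_one_le_of_nonpos hv.1.le (by linarith)
    nlinarith [Real.rpow_nonneg hv1 γ, Real.rpow_nonneg (show (0:ℝ) ≤ v by linarith [hv.1]) (γ - 1)]
  · have hbase : IntegrableOn (fun v : ℝ => v ^ (2 * γ - 1)) (Ioi 2) :=
      integrableOn_Ioi_rpow_of_lt (by linarith) (by norm_num)
    refine ((hbase.const_mul ((2:ℝ) ^ (-γ))).mono' measurable_g.aestronglyMeasurable ?_)
    filter_upwards [ae_restrict_mem measurableSet_Ioi] with v hv
    have hv2 : (2:ℝ) < v := hv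
    have hv0 : (0:ℝ) < v := by linarith
    have hv1 : (0:ℝ) < v - 1 := by linarith
    rw [Real.norm_eq_abs, abs_of_nonneg (mul_nonneg (Real.rpow_nonneg hv0.le _)
      (Real.rpow_nonneg hv1.le _))]
    have h1 : (v - 1) ^ γ ≤ (v / 2) ^ γ :=
      Real.rpow_le_rpow_of_nonpos (by linarith) (by linarith) hγ1.le
    have h2 : (v / 2) ^ γ = v ^ γ * 2 ^ (-γ) := by
      rw [Real.div_rpow hv0.le (by norm_num), Real.rpow_neg (by norm_num), div_eq_mul_inv]
    calc v ^ (γ - 1) * (v - 1) ^ γ ≤ v ^ (γ - 1) * (v ^ γ * 2 ^ (-γ)) := by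
          refine mul_le_mul_of_nonneg_left ?_ (Real.rpow_nonneg hv0.le _)
          rw [← h2]; exact h1
      _ = 2 ^ (-γ) * v ^ (2 * γ - 1) := by
          rw [show v ^ (γ - 1) * (v ^ γ * 2 ^ (-γ))
              = v ^ (γ - 1) * v ^ γ * 2 ^ (-γ) by ring,
            ← Real.rpow_add hv0, show γ - 1 + γ = 2 * γ - 1 by ring]
          ring

lemma subst_int {γ t s : ℝ} (hs : 0 < s) (hst : s < t) :
    (∫ u in s..t, u ^ (γ - 1) * (u - s) ^ γ)
      = s ^ (2 * γ) * ∫ v in (1:ℝ)..(t/s), v ^ (γ - 1) * (v - 1) ^ γ := by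
  have h := intervalIntegral.integral_comp_mul_right
    (fun u => u ^ (γ - 1) * (u - s) ^ γ) (a := 1) (b := t/s) hs.ne'
  rw [one_mul, div_mul_cancel₀ _ hs.ne'] at h
  have hts : (1:ℝ) ≤ t / s := (one_le_div hs).2 hst.le
  have hcongr : (∫ v in (1:ℝ)..(t/s), (v * s) ^ (γ - 1) * (v * s - s) ^ γ)
      = ∫ v in (1:ℝ)..(t/s), (s ^ (γ - 1) * s ^ γ) * (v ^ (γ - 1) * (v - 1) ^ γ) := by
    refine intervalIntegral.integral_congr fun v hv => ?_
    rw [uIcc_of_le hts] at hv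
    have hv1 : (1:ℝ) ≤ v := hv.1
    have hv0 : (0:ℝ) ≤ v := by linarith
    rw [Real.mul_rpow hv0 hs.le, show v * s - s = (v - 1) * s by ring,
      Real.mul_rpow (by linarith) hs.le]
    ring
  rw [hcongr, intervalIntegral.integral_const_mul] at h
  have h2 : (∫ u in s..t, u ^ (γ - 1) * (u - s) ^ γ)
      = s * (s ^ (γ - 1) * s ^ γ * ∫ v in (1:ℝ)..(t/s), v ^ (γ - 1) * (v - 1) ^ γ) := by
    rw [h, smul_eq_mul]
    field_simp
  have hpow : s * (s ^ (γ - 1) * s ^ γ) = s ^ (2 * γ) := by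
    rw [← Real.rpow_add hs, show γ - 1 + γ = 2 * γ - 1 by ring,
      show (2:ℝ) * γ = 1 + (2 * γ - 1) by ring, Real.rpow_add hs, Real.rpow_one]
    norm_num
  rw [h2, show s * (s ^ (γ - 1) * s ^ γ * ∫ v in (1:ℝ)..(t/s), v ^ (γ - 1) * (v - 1) ^ γ)
      = (s * (s ^ (γ - 1) * s ^ γ)) * ∫ v in (1:ℝ)..(t/s), v ^ (γ - 1) * (v - 1) ^ γ by ring,
    hpow]

lemma tendsto_b {γ t : ℝ} (hγ0 : -(1:ℝ)/2 < γ) (hγ1 : γ < 0) (ht : 0 < t) (c : ℝ) :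
    Tendsto (fun s => s ^ (-γ) * myK c γ t s) (𝓝[>] (0:ℝ))
      (𝓝 (c * (-γ) * ∫ v in Ioi (1:ℝ), v ^ (γ - 1) * (v - 1) ^ γ)) := by
  have hmem : Ioo (0:ℝ) t ∈ 𝓝[>] (0:ℝ) := Ioo_mem_nhdsGT_of_mem ⟨le_refl 0, ht⟩
  set J : ℝ := ∫ v in Ioi (1:ℝ), v ^ (γ - 1) * (v - 1) ^ γ with hJ
  have hEq : ∀ s ∈ Ioo (0:ℝ) t,
      s ^ (-γ) * myK c γ t s
        = c * (t ^ γ * (s ^ (-(2*γ)) * (t - s) ^ γ)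
            - γ * ∫ v in (1:ℝ)..(t/s), v ^ (γ - 1) * (v - 1) ^ γ) := by
    intro s hs
    have hs0 := hs.1
    have hts : (0:ℝ) < t - s := by linarith [hs.2]
    rw [myK, if_pos ⟨hs0, hs.2.le⟩, subst_int hs0 hs.2]
    have e1 : (t / s) ^ γ = t ^ γ * s ^ (-γ) := by
      rw [div_eq_mul_inv, Real.mul_rpow ht.le (by positivity),
        ← Real.rpow_neg_one s, ← Real.rpow_mul hs0.le]
      norm_num
    have e2 : s ^ (-γ) * s ^ (-γ) = s ^ (-(2*γ)) := by
      rw [← Real.rpow_add hs0]; ring_nf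
    have e3 : s ^ (-γ) * (s ^ (-γ) * s ^ (2*γ)) = 1 := by
      rw [← Real.rpow_add hs0, ← Real.rpow_add hs0,
        show -γ + (-γ + 2 * γ) = 0 by ring, Real.rpow_zero]
    calc s ^ (-γ) * (c * ((t/s) ^ γ * (t - s) ^ γ
            - γ * s ^ (-γ) * (s ^ (2*γ) * ∫ v in (1:ℝ)..(t/s), v ^ (γ - 1) * (v - 1) ^ γ)))
        = c * (t ^ γ * ((s ^ (-γ) * s ^ (-γ)) * (t - s) ^ γ)
            - γ * (s ^ (-γ) * (s ^ (-γ) * s ^ (2*γ)))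
              * ∫ v in (1:ℝ)..(t/s), v ^ (γ - 1) * (v - 1) ^ γ) := by
          rw [e1]; ring
      _ = _ := by rw [e2, e3]; ring
  have h1 : Tendsto (fun s : ℝ => s ^ (-(2*γ))) (𝓝[>] (0:ℝ)) (𝓝 0) := by
    have hc : ContinuousAt (fun x : ℝ => x ^ (-(2*γ))) 0 :=
      Real.continuousAt_rpow_const 0 _ (Or.inr (by linarith))
    have := hc.tendsto.mono_left (nhdsWithin_le_nhds (s := Ioi (0:ℝ)))
    simpa [Real.zero_rpow (show -(2*γ) ≠ 0 by linarith)] using this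
  have h2 : Tendsto (fun s : ℝ => (t - s) ^ γ) (𝓝[>] (0:ℝ)) (𝓝 (t ^ γ)) := by
    have hc : ContinuousAt (fun s : ℝ => (t - s) ^ γ) 0 := by
      refine ContinuousAt.rpow_const ?_ (Or.inl (by simpa using ht.ne'))
      exact (continuous_const.sub continuous_id).continuousAt
    simpa using hc.tendsto.mono_left nhdsWithin_le_nhds
  have h3 : Tendsto (fun s : ℝ => ∫ v in (1:ℝ)..(t/s), v ^ (γ - 1) * (v - 1) ^ γ)
      (𝓝[>] (0:ℝ)) (𝓝 J) := by
    have hdiv : Tendsto (fun s : ℝ => t / s) (𝓝[>] (0:ℝ)) atTop := by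
      have := Tendsto.const_mul_atTop ht tendsto_inv_nhdsGT_zero
      simpa [div_eq_mul_inv] using this
    exact intervalIntegral_tendsto_integral_Ioi 1 (g_integrable hγ0 hγ1) hdiv
  have hmain : Tendsto (fun s : ℝ => c * (t ^ γ * (s ^ (-(2*γ)) * (t - s) ^ γ)
      - γ * ∫ v in (1:ℝ)..(t/s), v ^ (γ - 1) * (v - 1) ^ γ)) (𝓝[>] (0:ℝ))
      (𝓝 (c * (t ^ γ * (0 * t ^ γ) - γ * J))) :=
    tendsto_const_nhds.mul ((tendsto_const_nhds.mul (h1.mul h2)).sub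
      (tendsto_const_nhds.mul h3))
  have : Tendsto (fun s : ℝ => c * (t ^ γ * (s ^ (-(2*γ)) * (t - s) ^ γ)
      - γ * ∫ v in (1:ℝ)..(t/s), v ^ (γ - 1) * (v - 1) ^ γ)) (𝓝[>] (0:ℝ))
      (𝓝 (c * (-γ) * J)) := by
    convert hmain using 2; ring
  exact this.congr' (by filter_upwards [hmem] with s hs; exact (hEq s hs).symm)

lemma rpow_tendsto_atTop {γ : ℝ} (hγ1 : γ < 0) :
    Tendsto (fun s : ℝ => s ^ γ) (𝓝[>] (0:ℝ)) atTop := by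
  have h := (tendsto_rpow_atTop (show (0:ℝ) < -γ by linarith)).comp tendsto_inv_nhdsGT_zero
  refine h.congr' ?_
  filter_upwards [self_mem_nhdsWithin] with s (hs : (0:ℝ) < s)
  simp only [Function.comp_apply]
  rw [← Real.rpow_neg_one s, ← Real.rpow_mul hs.le]
  norm_num

lemma J_pos {γ : ℝ} (hγ0 : -(1:ℝ)/2 < γ) (hγ1 : γ < 0) :
    0 < ∫ v in Ioi (1:ℝ), v ^ (γ - 1) * (v - 1) ^ γ := by
  rw [setIntegral_pos_iff_support_of_nonneg_ae ?_ (g_integrable hγ0 hγ1)]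
  · have hsub : Ioi (1:ℝ) ⊆ Function.support fun v : ℝ => v ^ (γ - 1) * (v - 1) ^ γ := by
      intro v hv
      have hv1 : (1:ℝ) < v := hv
      exact ne_of_gt (mul_pos (Real.rpow_pos_of_pos (by linarith) _)
        (Real.rpow_pos_of_pos (by linarith) _))
    rw [Set.inter_eq_self_of_subset_right hsub]
    simp [Real.volume_Ioi]
  · filter_upwards [ae_restrict_mem measurableSet_Ioi] with v hv
    have hv1 : (1:ℝ) < v := hv
    exact mul_nonneg (Real.rpow_nonneg (by linarith) _) (Real.rpow_nonneg (by linarith) _)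

theorem stmt6 (α H t : ℝ) (hα : α ∈ Set.Ioo (0:ℝ) 2)
    (hH : H ∈ Set.Ioo (1/α - 1/2) (1/α)) (ht : 0 < t) :
    Filter.Tendsto (fun s => (t - s) ^ (1/α - H) * volK H α t s)
        (nhdsWithin t (Set.Iio t)) (nhds (cK H α)) ∧
    Filter.Tendsto (fun s => s ^ (1/α - H) * volK H α t s)
        (nhdsWithin 0 (Set.Ioi 0))
        (nhds (cK H α * (1/α - H) *
          ∫ v in Set.Ioi (1:ℝ), v ^ (H - 1/α - 1) * (v - 1) ^ (H - 1/α))) ∧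
    (∀ ε > (0:ℝ), ¬ BddAbove ((fun s => volK H α t s) '' Set.Ioo 0 (min ε t))) ∧
    (∀ ε > (0:ℝ), ¬ BddAbove ((fun s => volK H α t s) '' Set.Ioo (max (t - ε) 0) t)) := by
  obtain ⟨hα0, hα2⟩ := hα
  obtain ⟨hH1, hH2⟩ := hH
  set γ : ℝ := H - 1/α with hγdef
  have hγ0 : -(1:ℝ)/2 < γ := by rw [hγdef]; linarith
  have hγ1 : γ < 0 := by rw [hγdef]; linarith
  set c : ℝ := cK H α with hcdef
  have hexp : 1/α - H = -γ := by rw [hγdef]; ring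
  have hc0 : 0 < c := by
    rw [hcdef, cK]
    apply Real.rpow_pos_of_pos
    have hG0 : 0 < H - 1/α + 1/2 := by linarith
    have hG1 : H - 1/α + 1/2 < 1/2 := by linarith
    apply div_pos
    · exact mul_pos (mul_pos hG0 (by linarith)) (Real.Gamma_pos_of_pos (by linarith))
    · exact mul_pos (Real.Gamma_pos_of_pos (by linarith)) (Real.Gamma_pos_of_pos (by linarith))
  have hvolK : ∀ s, volK H α t s = myK c γ t s := fun s => volK_eq_myK H α t s
  have ha : Tendsto (fun s => (t - s) ^ (1/α - H) * volK H α t s) (𝓝[<] t) (𝓝 c) := by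
    simp only [hvolK, hexp]
    exact tendsto_a hγ0 hγ1 ht c
  have hb : Tendsto (fun s => s ^ (1/α - H) * volK H α t s) (𝓝[>] (0:ℝ))
      (𝓝 (c * (1/α - H) * ∫ v in Ioi (1:ℝ), v ^ (H - 1/α - 1) * (v - 1) ^ (H - 1/α))) := by
    simp only [hvolK, hexp, ← hγdef]
    exact tendsto_b hγ0 hγ1 ht c
  have hL : 0 < c * (-γ) * ∫ v in Ioi (1:ℝ), v ^ (γ - 1) * (v - 1) ^ γ :=
    mul_pos (mul_pos hc0 (by linarith)) (J_pos hγ0 hγ1)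
  have hTop0 : Tendsto (fun s => myK c γ t s) (𝓝[>] (0:ℝ)) atTop := by
    have h := Filter.Tendsto.atTop_mul_pos hL (rpow_tendsto_atTop hγ1)
      (tendsto_b hγ0 hγ1 ht c)
    refine h.congr' ?_
    filter_upwards [Ioo_mem_nhdsGT_of_mem (Set.mem_Ico.2 ⟨le_refl (0:ℝ), ht⟩)] with s hs
    rw [← hvolK s, ← mul_assoc, ← Real.rpow_add hs.1, add_neg_cancel, Real.rpow_zero, one_mul,
      hvolK s]
  have hTopt : Tendsto (fun s => myK c γ t s) (𝓝[<] t) atTop := by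
    have hsub : Tendsto (fun s => t - s) (𝓝[<] t) (𝓝[>] (0:ℝ)) := by
      rw [tendsto_nhdsWithin_iff]
      constructor
      · have : Tendsto (fun s : ℝ => t - s) (𝓝 t) (𝓝 (t - t)) :=
          (continuous_const.sub continuous_id).tendsto t
        simpa using this.mono_left nhdsWithin_le_nhds
      · filter_upwards [self_mem_nhdsWithin] with s (hs : s < t)
        simpa using hs
    have h := Filter.Tendsto.atTop_mul_pos hc0
      ((rpow_tendsto_atTop hγ1).comp hsub) (tendsto_a hγ0 hγ1 ht c)
    refine h.congr' ?_
    filter_upwards [Ioo_mem_nhdsLT_of_mem (Set.mem_Ioc.2 ⟨ht, le_refl t⟩)] with s hs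
    have hts : (0:ℝ) < t - s := by linarith [hs.2]
    simp only [Function.comp_apply]
    rw [← mul_assoc, ← Real.rpow_add hts, add_neg_cancel, Real.rpow_zero, one_mul]
  refine ⟨ha, hb, ?_, ?_⟩
  · intro ε hε
    rintro ⟨M, hM⟩
    have hmem2 : Ioo (0:ℝ) (min ε t) ∈ 𝓝[>] (0:ℝ) :=
      Ioo_mem_nhdsGT_of_mem (Set.mem_Ico.2 ⟨le_refl 0, lt_min hε ht⟩)
    obtain ⟨s, hMs, hsmem⟩ :=
      ((hTop0.eventually (eventually_gt_atTop M)).and (eventually_of_mem hmem2 fun x hx => hx)).exists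
    have := hM (Set.mem_image_of_mem _ hsmem)
    rw [hvolK s] at this
    linarith
  · intro ε hε
    rintro ⟨M, hM⟩
    have hmem2 : Ioo (max (t - ε) 0) t ∈ 𝓝[<] t :=
      Ioo_mem_nhdsLT_of_mem (Set.mem_Ioc.2 ⟨max_lt (by linarith) ht, le_refl t⟩)
    obtain ⟨s, hMs, hsmem⟩ :=
      ((hTopt.eventually (eventually_gt_atTop M)).and (eventually_of_mem hmem2 fun x hx => hx)).exists
    have := hM (Set.mem_image_of_mem _ hsmem)
    rw [hvolK s] at this
    linarith
end

section
/- Let α ∈ (0,1) ∪ (1,2) and s ∈ ℝ. Then lim_{h → 0⁺} h · ψ_α(h^{−1/α} s) = Γ(−α) |s|^α (cos(πα/2) − i sin(πα/2) · sgn(s)), where the limit is in ℂ. -/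
open MeasureTheory Real Set Complex

/-- The function `ψ_α`: for `α ∈ (0,1)`, `ψ_α(s) = Γ(-α)((1-is)^α - 1)`;
for `α ∈ (1,2)`, `ψ_α(s) = Γ(-α)((1-is)^α - 1 + iαs)` (principal branch powers). -/
noncomputable def psiTS (α : ℝ) (s : ℝ) : ℂ :=
  if α < 1 then Complex.Gamma (-(α:ℂ)) * ((1 - Complex.I * (s:ℂ)) ^ (α:ℂ) - 1)
  else Complex.Gamma (-(α:ℂ)) * ((1 - Complex.I * (s:ℂ)) ^ (α:ℂ) - 1 + Complex.I * α * s)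

/-- For positive real `r` and nonzero `z`, `(r z)^w = r^w z^w` (principal branch). -/
lemma aux_real_mul_cpow {r : ℝ} (hr : 0 < r) {z : ℂ} (hz : z ≠ 0) (w : ℂ) :
    ((r : ℂ) * z) ^ w = (r : ℂ) ^ w * z ^ w := by
  have hr' : (r : ℂ) ≠ 0 := by exact_mod_cast hr.ne'
  rw [Complex.cpow_def_of_ne_zero (mul_ne_zero hr' hz),
    Complex.cpow_def_of_ne_zero hr', Complex.cpow_def_of_ne_zero hz,
    Complex.log_ofReal_mul hr hz, add_mul, Complex.exp_add,
    ← Complex.ofReal_log hr.le]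

/-- Value of `(-i s)^α` for real `s ≠ 0`. -/
lemma aux_neg_I_mul_cpow {s : ℝ} (hs : s ≠ 0) (α : ℝ) :
    (-Complex.I * (s : ℂ)) ^ (α : ℂ) = ((|s| ^ α : ℝ) : ℂ) *
      (((Real.cos (Real.pi * α / 2) : ℝ) : ℂ) -
        Complex.I * ((Real.sin (Real.pi * α / 2) : ℝ) : ℂ) * ((Real.sign s : ℝ) : ℂ)) := by
  rcases hs.lt_or_gt with hneg | hpos
  · have h1 : (-Complex.I * (s : ℂ)) = ((-s : ℝ) : ℂ) * Complex.I := by push_cast; ring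
    have h2 : (0:ℝ) < -s := by linarith
    rw [h1, Complex.cpow_def_of_ne_zero
      (mul_ne_zero (Complex.ofReal_ne_zero.mpr h2.ne') Complex.I_ne_zero),
      Complex.log_ofReal_mul h2 Complex.I_ne_zero, Complex.log_I]
    have h3 : ((Real.log (-s) : ℂ) + ↑Real.pi / 2 * Complex.I) * (α : ℂ) =
        ((Real.log (-s) * α : ℝ) : ℂ) + ((Real.pi * α / 2 : ℝ) : ℂ) * Complex.I := by
      push_cast; ring
    rw [h3, Complex.exp_add, ← Complex.ofReal_exp, ← Real.rpow_def_of_pos h2,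
      Complex.exp_mul_I, ← Complex.ofReal_cos, ← Complex.ofReal_sin]
    have h4 : |s| = -s := abs_of_neg hneg
    have h5 : Real.sign s = -1 := Real.sign_of_neg hneg
    rw [h4, h5]
    push_cast
    ring
  · have h1 : (-Complex.I * (s : ℂ)) = ((s : ℝ) : ℂ) * (-Complex.I) := by rw [neg_mul]; ring
    rw [h1, Complex.cpow_def_of_ne_zero
      (mul_ne_zero (Complex.ofReal_ne_zero.mpr hpos.ne') (neg_ne_zero.mpr Complex.I_ne_zero)),
      Complex.log_ofReal_mul hpos (neg_ne_zero.mpr Complex.I_ne_zero), Complex.log_neg_I]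
    have h3 : ((Real.log s : ℂ) + -(↑Real.pi / 2) * Complex.I) * (α : ℂ) =
        ((Real.log s * α : ℝ) : ℂ) + ((-(Real.pi * α / 2) : ℝ) : ℂ) * Complex.I := by
      push_cast; ring
    rw [h3, Complex.exp_add, ← Complex.ofReal_exp, ← Real.rpow_def_of_pos hpos,
      Complex.exp_mul_I, ← Complex.ofReal_cos, ← Complex.ofReal_sin]
    have h4 : |s| = s := abs_of_pos hpos
    have h5 : Real.sign s = 1 := Real.sign_of_pos hpos
    rw [h4, h5]
    push_cast [Real.cos_neg, Real.sin_neg]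
    ring

theorem stmt10 (α s : ℝ) (hα : α ∈ Set.Ioo (0:ℝ) 1 ∪ Set.Ioo (1:ℝ) 2) :
    Filter.Tendsto (fun h : ℝ => (h:ℂ) * psiTS α (h ^ (-1/α) * s))
      (nhdsWithin 0 (Set.Ioi 0))
      (nhds (Complex.Gamma (-(α:ℂ)) * ((|s| ^ α : ℝ) : ℂ) *
        (((Real.cos (Real.pi * α / 2) : ℝ) : ℂ) -
          Complex.I * ((Real.sin (Real.pi * α / 2) : ℝ) : ℂ) * ((Real.sign s : ℝ) : ℂ)))) := by
  have hα0 : 0 < α := by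
    rcases hα with h | h
    · exact h.1
    · linarith [h.1]
  -- trivial case s = 0
  rcases eq_or_ne s 0 with rfl | hs
  · have hfun : ∀ h : ℝ, (h:ℂ) * psiTS α (h ^ (-1/α) * 0) = 0 := by
      intro h
      simp [psiTS, Complex.one_cpow]
    have htarget : Complex.Gamma (-(α:ℂ)) * ((|(0:ℝ)| ^ α : ℝ) : ℂ) *
        (((Real.cos (Real.pi * α / 2) : ℝ) : ℂ) -
          Complex.I * ((Real.sin (Real.pi * α / 2) : ℝ) : ℂ) * ((Real.sign (0:ℝ) : ℝ) : ℂ)) = 0 := by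
      rw [abs_zero, Real.zero_rpow hα0.ne']
      simp
    rw [htarget]
    simp only [hfun]
    exact tendsto_const_nhds
  -- main case
  have hsC : (s : ℂ) ≠ 0 := by exact_mod_cast hs
  have hbase : Filter.Tendsto (fun h : ℝ => ((h ^ α⁻¹ : ℝ) : ℂ) - Complex.I * (s:ℂ))
      (nhdsWithin 0 (Set.Ioi 0)) (nhds (-Complex.I * (s:ℂ))) := by
    have h1 : Filter.Tendsto (fun h : ℝ => h ^ α⁻¹) (nhdsWithin 0 (Set.Ioi 0)) (nhds 0) := by
      have := (Real.continuousAt_rpow_const 0 α⁻¹ (Or.inr (by positivity))).tendsto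
      rw [Real.zero_rpow (by positivity : α⁻¹ ≠ 0)] at this
      exact this.mono_left nhdsWithin_le_nhds
    have h2 : Filter.Tendsto (fun h : ℝ => ((h ^ α⁻¹ : ℝ) : ℂ))
        (nhdsWithin 0 (Set.Ioi 0)) (nhds 0) := by
      have := (Complex.continuous_ofReal.tendsto 0).comp h1
      simpa [Function.comp_def] using this
    have := h2.sub_const (Complex.I * (s:ℂ))
    simpa [neg_mul] using this
  have hslit : (-Complex.I * (s:ℂ)) ∈ Complex.slitPlane := by
    right
    simp [Complex.ext_iff, hs]
  have hcpow : Filter.Tendsto (fun h : ℝ => (((h ^ α⁻¹ : ℝ) : ℂ) - Complex.I * (s:ℂ)) ^ (α:ℂ))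
      (nhdsWithin 0 (Set.Ioi 0)) (nhds ((-Complex.I * (s:ℂ)) ^ (α:ℂ))) :=
    ((continuousAt_cpow_const hslit).tendsto).comp hbase
  have hh0 : Filter.Tendsto (fun h : ℝ => (h : ℂ)) (nhdsWithin 0 (Set.Ioi 0)) (nhds 0) := by
    have h1 : Filter.Tendsto (fun h : ℝ => (h : ℂ)) (nhds 0) (nhds 0) := by
      simpa using Complex.continuous_ofReal.tendsto 0
    exact h1.mono_left nhdsWithin_le_nhds
  -- key pointwise identity on Ioi 0
  have hkey : ∀ h ∈ Set.Ioi (0:ℝ),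
      (h:ℂ) * ((1 - Complex.I * ((h ^ (-1/α) * s : ℝ) : ℂ)) ^ (α:ℂ))
        = (((h ^ α⁻¹ : ℝ) : ℂ) - Complex.I * (s:ℂ)) ^ (α:ℂ) := by
    intro h hh
    have hh' : (0:ℝ) < h := hh
    set r : ℝ := h ^ α⁻¹ with hr_def
    have hr : 0 < r := Real.rpow_pos_of_pos hh' _
    have hinv : h ^ (-1/α) = r⁻¹ := by
      rw [hr_def, show (-1/α : ℝ) = -(α⁻¹) by rw [neg_div, one_div],
        Real.rpow_neg hh'.le]
    have hz : (1 - Complex.I * ((r⁻¹ * s : ℝ) : ℂ)) ≠ 0 := by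
      intro hzero
      have := congrArg Complex.re hzero
      simp at this
    have hsplit : (((r : ℝ) : ℂ) - Complex.I * (s:ℂ))
        = (r : ℂ) * (1 - Complex.I * ((r⁻¹ * s : ℝ) : ℂ)) := by
      have hrC : (r : ℂ) ≠ 0 := by exact_mod_cast hr.ne'
      push_cast
      field_simp
    rw [hinv, hsplit, aux_real_mul_cpow hr hz]
    have hpow : ((r : ℂ)) ^ (α : ℂ) = (h : ℂ) := by
      rw [← Complex.ofReal_cpow hr.le]
      congr 1
      rw [hr_def, ← Real.rpow_mul hh'.le, inv_mul_cancel₀ hα0.ne', Real.rpow_one]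
    rw [hpow]
  rcases hα with hα1 | hα2
  · -- α ∈ (0,1)
    have hlt : α < 1 := hα1.2
    have heq : ∀ᶠ h : ℝ in nhdsWithin (0:ℝ) (Set.Ioi (0:ℝ)),
        (h:ℂ) * psiTS α (h ^ (-1/α) * s)
          = Complex.Gamma (-(α:ℂ)) *
            (((((h ^ α⁻¹ : ℝ) : ℂ) - Complex.I * (s:ℂ)) ^ (α:ℂ)) - (h:ℂ)) := by
      filter_upwards [self_mem_nhdsWithin] with h hh
      rw [psiTS, if_pos hlt, ← hkey h hh]
      ring
    have hlim : Filter.Tendsto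
        (fun h : ℝ => Complex.Gamma (-(α:ℂ)) *
            (((((h ^ α⁻¹ : ℝ) : ℂ) - Complex.I * (s:ℂ)) ^ (α:ℂ)) - (h:ℂ)))
        (nhdsWithin 0 (Set.Ioi 0))
        (nhds (Complex.Gamma (-(α:ℂ)) * (((-Complex.I * (s:ℂ)) ^ (α:ℂ)) - 0))) :=
      Filter.Tendsto.const_mul _ (hcpow.sub hh0)
    refine (Filter.Tendsto.congr' (Filter.EventuallyEq.symm heq) ?_)
    convert hlim using 2
    rw [aux_neg_I_mul_cpow hs α]
    ring
  · -- α ∈ (1,2)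
    have hlt : ¬ α < 1 := not_lt.mpr hα2.1.le
    have hexp : Filter.Tendsto (fun h : ℝ => ((h ^ (1 - α⁻¹) : ℝ) : ℂ))
        (nhdsWithin 0 (Set.Ioi 0)) (nhds 0) := by
      have hpos : (0:ℝ) < 1 - α⁻¹ := by
        have h1 : α⁻¹ < 1 := by
          rw [inv_lt_one_iff₀]
          right; exact hα2.1
        linarith
      have h1 : Filter.Tendsto (fun h : ℝ => h ^ (1 - α⁻¹))
          (nhdsWithin 0 (Set.Ioi 0)) (nhds 0) := by
        have := (Real.continuousAt_rpow_const 0 (1 - α⁻¹) (Or.inr hpos.le)).tendsto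
        rw [Real.zero_rpow hpos.ne'] at this
        exact this.mono_left nhdsWithin_le_nhds
      have := (Complex.continuous_ofReal.tendsto 0).comp h1
      simpa [Function.comp_def] using this
    have heq : ∀ᶠ h : ℝ in nhdsWithin (0:ℝ) (Set.Ioi (0:ℝ)),
        (h:ℂ) * psiTS α (h ^ (-1/α) * s)
          = Complex.Gamma (-(α:ℂ)) *
            (((((h ^ α⁻¹ : ℝ) : ℂ) - Complex.I * (s:ℂ)) ^ (α:ℂ)) - (h:ℂ)
              + Complex.I * (α:ℂ) * (s:ℂ) * ((h ^ (1 - α⁻¹) : ℝ) : ℂ)) := by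
      filter_upwards [self_mem_nhdsWithin] with h hh
      have hh' : (0:ℝ) < h := hh
      have hmul : ((h ^ (1 - α⁻¹) : ℝ) : ℂ) = (h:ℂ) * ((h ^ (-1/α) : ℝ) : ℂ) := by
        rw [← Complex.ofReal_mul]
        congr 1
        rw [show (-1/α : ℝ) = -(α⁻¹) by rw [neg_div, one_div],
          show (1 - α⁻¹ : ℝ) = 1 + -(α⁻¹) by ring,
          Real.rpow_add hh', Real.rpow_one]
      rw [psiTS, if_neg hlt, ← hkey h hh, hmul]
      push_cast
      ring
    have hlim : Filter.Tendsto
        (fun h : ℝ => Complex.Gamma (-(α:ℂ)) *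
            (((((h ^ α⁻¹ : ℝ) : ℂ) - Complex.I * (s:ℂ)) ^ (α:ℂ)) - (h:ℂ)
              + Complex.I * (α:ℂ) * (s:ℂ) * ((h ^ (1 - α⁻¹) : ℝ) : ℂ)))
        (nhdsWithin 0 (Set.Ioi 0))
        (nhds (Complex.Gamma (-(α:ℂ)) * (((-Complex.I * (s:ℂ)) ^ (α:ℂ)) - 0
          + Complex.I * (α:ℂ) * (s:ℂ) * 0))) :=
      Filter.Tendsto.const_mul _ ((hcpow.sub hh0).add (hexp.const_mul _))
    refine (Filter.Tendsto.congr' (Filter.EventuallyEq.symm heq) ?_)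
    convert hlim using 2
    rw [aux_neg_I_mul_cpow hs α]
    ring
end

section
/- Let α ∈ (0,1) ∪ (1,2). There exists a constant z_α > 0, depending only on α, such that for all h > 0 and all s ∈ ℝ, |h · ψ_α(h^{−1/α} s)| ≤ z_α |s|^α. -/
open MeasureTheory Real Set Complex

lemma one_le_abs_aux (s t : ℝ) : 1 ≤ ‖1 - Complex.I * s * t‖ := by
  have h : (1 - Complex.I * (s:ℂ) * (t:ℂ)).re = 1 := by simp
  calc (1:ℝ) = |(1 - Complex.I * (s:ℂ) * (t:ℂ)).re| := by rw [h]; norm_num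
    _ ≤ ‖_‖ := Complex.abs_re_le_norm _

lemma ne_zero_aux (s t : ℝ) : (1 - Complex.I * s * t) ≠ 0 := by
  intro h
  have h1 := one_le_abs_aux s t
  rw [h] at h1; simp at h1
  linarith

lemma abs_cpow_aux (z : ℂ) (hz : z ≠ 0) (β : ℝ) :
    ‖z ^ (β:ℂ)‖ = ‖z‖ ^ β := by
  rw [Complex.norm_cpow_of_ne_zero hz]
  simp

lemma deriv_aux (s β : ℝ) (t : ℝ) :
    HasDerivAt (fun t : ℝ => (1 - Complex.I * s * (t:ℂ)) ^ (β:ℂ))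
      ((β:ℂ) * (1 - Complex.I * s * t) ^ ((β:ℂ) - 1) * (-(Complex.I * s))) t := by
  have h1 : HasDerivAt (fun w : ℂ => (1 - Complex.I * s * w) ^ (β:ℂ))
      ((β:ℂ) * (1 - Complex.I * s * t) ^ ((β:ℂ)-1) * (-(Complex.I*s))) (t:ℂ) := by
    apply HasDerivAt.cpow_const
    · simpa using ((hasDerivAt_id ((t:ℝ):ℂ)).const_mul (Complex.I*(s:ℂ))).const_sub 1
    · rw [Complex.mem_slitPlane_iff]; left; simp
  exact h1.comp_ofReal

/-- Key bound for `β ∈ (0,1]`. -/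
lemma absA {β : ℝ} (hβ0 : 0 < β) (hβ1 : β ≤ 1) (s : ℝ) :
    ‖(1 - Complex.I * s) ^ (β:ℂ) - 1‖ ≤ β * |s| := by
  set f : ℝ → ℂ := fun t => (1 - Complex.I * s * (t:ℂ)) ^ (β:ℂ) with hf
  set f' : ℝ → ℂ := fun t =>
    (β:ℂ) * (1 - Complex.I * s * t) ^ ((β:ℂ) - 1) * (-(Complex.I * s)) with hf'
  have hderiv : ∀ t ∈ Icc (0:ℝ) 1, HasDerivWithinAt f (f' t) (Icc 0 1) t :=
    fun t _ => (deriv_aux s β t).hasDerivWithinAt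
  have hbound : ∀ t ∈ Icc (0:ℝ) 1, ‖f' t‖ ≤ β * |s| := by
    intro t _
    have h1 : (1:ℝ) ≤ ‖1 - Complex.I * s * t‖ := one_le_abs_aux s t
    have h2 : ‖(1 - Complex.I * s * (t:ℂ)) ^ ((β:ℂ) - 1)‖
        = ‖1 - Complex.I * s * t‖ ^ (β - 1) := by
      have e : ((β - 1 : ℝ) : ℂ) = (β:ℂ) - 1 := by push_cast; ring
      rw [← e, abs_cpow_aux _ (ne_zero_aux s t)]
    have h3 : ‖1 - Complex.I * s * t‖ ^ (β - 1) ≤ 1 :=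
      Real.rpow_le_one_of_one_le_of_nonpos h1 (by linarith)
    have : ‖f' t‖ = β * (‖1 - Complex.I * s * t‖ ^ (β - 1)) * |s| := by
      simp only [hf', norm_mul, norm_neg, h2]
      simp [Complex.norm_real, abs_of_pos hβ0]
      try ring
    rw [this]
    calc β * (‖1 - Complex.I * s * t‖ ^ (β - 1)) * |s|
        ≤ β * 1 * |s| := by
          apply mul_le_mul_of_nonneg_right _ (abs_nonneg s)
          exact mul_le_mul_of_nonneg_left h3 hβ0.le
      _ = β * |s| := by ring
  have key := (convex_Icc (0:ℝ) 1).norm_image_sub_le_of_norm_hasDerivWithin_le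
    hderiv hbound (left_mem_Icc.2 zero_le_one) (right_mem_Icc.2 zero_le_one)
  have hf1 : f 1 = (1 - Complex.I * s) ^ (β:ℂ) := by simp [hf]
  have hf0 : f 0 = 1 := by
    simp only [hf, Complex.ofReal_zero, mul_zero, sub_zero]
    exact Complex.one_cpow _
  rw [hf1, hf0] at key
  simpa using key

/-- Key bound for `α ∈ (1,2)`. -/
lemma absB {α : ℝ} (hα1 : 1 < α) (hα2 : α < 2) (s : ℝ) :
    ‖(1 - Complex.I * s) ^ (α:ℂ) - 1 + Complex.I * α * s‖ ≤ α * (α-1) * s^2 := by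
  set g : ℝ → ℂ := fun t => (1 - Complex.I * s * (t:ℂ)) ^ (α:ℂ) + Complex.I * α * s * t with hg
  set g' : ℝ → ℂ := fun t =>
    (-(Complex.I * α * s)) * ((1 - Complex.I * s * t) ^ ((α:ℂ) - 1) - 1) with hg'
  have hderiv : ∀ t ∈ Icc (0:ℝ) 1, HasDerivWithinAt g (g' t) (Icc 0 1) t := by
    intro t _
    have h1 := deriv_aux s α t
    have h2 : HasDerivAt (fun t : ℝ => Complex.I * α * s * (t:ℂ)) (Complex.I * α * s) t := by
      simpa using (Complex.ofRealCLM.hasDerivAt (x := t)).const_mul (Complex.I * (α:ℂ) * s)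
    have h4 : HasDerivAt g (g' t) t := by
      have h3 := h1.add h2
      convert h3 using 1
      · rfl
      · rfl
      simp only [hg']
      ring
    exact h4.hasDerivWithinAt
  have hbound : ∀ t ∈ Icc (0:ℝ) 1, ‖g' t‖ ≤ α * (α-1) * s^2 := by
    intro t ht
    have hA := absA (β := α - 1) (by linarith) (by linarith) (s * t)
    have heq : ((1 - Complex.I * ↑(s*t)) ^ (((α-1:ℝ)):ℂ) - 1)
        = ((1 - Complex.I * s * t) ^ ((α:ℂ) - 1) - 1) := by
      push_cast [mul_assoc]
      try rfl
    rw [heq] at hA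
    have : ‖g' t‖ = (α * |s|) * ‖(1 - Complex.I * s * t) ^ ((α:ℂ) - 1) - 1‖ := by
      simp only [hg', norm_mul, norm_neg]
      simp [Complex.norm_real, abs_of_pos (by linarith : (0:ℝ) < α)]
      try ring
    rw [this]
    calc (α * |s|) * ‖(1 - Complex.I * s * t) ^ ((α:ℂ) - 1) - 1‖
        ≤ (α * |s|) * ((α - 1) * |s * t|) := by
          apply mul_le_mul_of_nonneg_left hA
          positivity
      _ ≤ (α * |s|) * ((α - 1) * |s|) := by
          apply mul_le_mul_of_nonneg_left _ (by positivity)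
          apply mul_le_mul_of_nonneg_left _ (by linarith)
          rw [abs_mul]
          calc |s| * |t| ≤ |s| * 1 := by
                apply mul_le_mul_of_nonneg_left _ (abs_nonneg s)
                rw [abs_le]; exact ⟨by linarith [ht.1], ht.2⟩
            _ = |s| := by ring
      _ = α * (α - 1) * s^2 := by rw [← _root_.sq_abs s]; ring
  have key := (convex_Icc (0:ℝ) 1).norm_image_sub_le_of_norm_hasDerivWithin_le
    hderiv hbound (left_mem_Icc.2 zero_le_one) (right_mem_Icc.2 zero_le_one)
  have hg1 : g 1 = (1 - Complex.I * s) ^ (α:ℂ) + Complex.I * α * s := by simp [hg]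
  have hg0 : g 0 = 1 := by
    simp only [hg, Complex.ofReal_zero, mul_zero, sub_zero, add_zero]
    exact Complex.one_cpow _
  rw [hg1, hg0] at key
  have : (1 - Complex.I * s) ^ (α:ℂ) + Complex.I * ↑α * ↑s - 1
      = (1 - Complex.I * s) ^ (α:ℂ) - 1 + Complex.I * ↑α * ↑s := by ring
  rw [this] at key
  simpa using key

/-- Bound on `|(1-is)^α|` for `|s| ≥ 1`. -/
lemma abs_cpow_big {α : ℝ} (hα0 : 0 < α) (hα2 : α ≤ 2) {s : ℝ} (hs : 1 ≤ |s|) :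
    ‖(1 - Complex.I * s) ^ (α:ℂ)‖ ≤ 2 * |s| ^ α := by
  have hz : (1 - Complex.I * (s:ℂ)) ≠ 0 := by
    have := ne_zero_aux s 1; simpa using this
  rw [abs_cpow_aux _ hz]
  have habs : ‖1 - Complex.I * s‖ ≤ Real.sqrt 2 * |s| := by
    rw [Complex.norm_def]
    have hnsq : Complex.normSq (1 - Complex.I * s) = 1 + s^2 := by
      simp [Complex.normSq_apply]; ring
    rw [hnsq]
    have h1 : 1 + s^2 ≤ 2 * s^2 := by nlinarith [_root_.sq_abs s]
    calc Real.sqrt (1 + s^2) ≤ Real.sqrt (2 * s^2) := Real.sqrt_le_sqrt h1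
      _ = Real.sqrt 2 * |s| := by
          rw [Real.sqrt_mul (by norm_num), Real.sqrt_sq_eq_abs]
  calc ‖1 - Complex.I * s‖ ^ α ≤ (Real.sqrt 2 * |s|) ^ α :=
        Real.rpow_le_rpow (norm_nonneg _) habs hα0.le
    _ = Real.sqrt 2 ^ α * |s| ^ α := Real.mul_rpow (Real.sqrt_nonneg 2) (abs_nonneg s)
    _ ≤ 2 * |s| ^ α := by
        apply mul_le_mul_of_nonneg_right _ (Real.rpow_nonneg (abs_nonneg s) α)
        have h1 : (1:ℝ) ≤ Real.sqrt 2 := by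
          rw [show (1:ℝ) = Real.sqrt 1 by simp]
          exact Real.sqrt_le_sqrt (by norm_num)
        calc Real.sqrt 2 ^ α ≤ Real.sqrt 2 ^ (2:ℝ) :=
              Real.rpow_le_rpow_of_exponent_le h1 hα2
          _ = 2 := by
              rw [show ((2:ℝ)) = ((2:ℕ):ℝ) by norm_num, Real.rpow_natCast]
              exact Real.sq_sqrt (by norm_num)

/-- Bound `|ψ_α(s)| ≤ 5|Γ(-α)| |s|^α`. -/
lemma psi_bound (α : ℝ) (hα : α ∈ Set.Ioo (0:ℝ) 1 ∪ Set.Ioo (1:ℝ) 2) (s : ℝ) :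
    ‖psiTS α s‖ ≤ (‖Complex.Gamma (-(α:ℂ))‖ * 5) * |s| ^ α := by
  have hα0 : 0 < α := by rcases hα with h | h; exacts [h.1, by linarith [h.1]]
  have hα2 : α < 2 := by rcases hα with h | h; exacts [by linarith [h.2], h.2]
  by_cases hs0 : s = 0
  · subst hs0
    have : psiTS α 0 = 0 := by
      unfold psiTS
      split <;> simp [Complex.one_cpow]
    rw [this]
    simp [Real.zero_rpow (ne_of_gt hα0)]
  have hΓ : 0 ≤ ‖Complex.Gamma (-(α:ℂ))‖ := norm_nonneg _
  have hsα : 0 ≤ |s| ^ α := Real.rpow_nonneg (abs_nonneg s) α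
  rcases hα with h | h
  · -- α ∈ (0,1)
    have hif : psiTS α s = Complex.Gamma (-(α:ℂ)) * ((1 - Complex.I * (s:ℂ)) ^ (α:ℂ) - 1) := by
      unfold psiTS; rw [if_pos h.2]
    rw [hif, norm_mul]
    rcases le_or_gt |s| 1 with hs | hs
    · have hA := absA h.1 h.2.le s
      have h1 : |s| ≤ |s| ^ α := by
        calc |s| = |s| ^ (1:ℝ) := (Real.rpow_one _).symm
          _ ≤ |s| ^ α := Real.rpow_le_rpow_of_exponent_ge (abs_pos.2 hs0) hs h.2.le
      calc ‖Complex.Gamma (-(α:ℂ))‖ * ‖(1 - Complex.I * s) ^ (α:ℂ) - 1‖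
          ≤ ‖Complex.Gamma (-(α:ℂ))‖ * (α * |s|) := by
            exact mul_le_mul_of_nonneg_left hA hΓ
        _ ≤ (‖Complex.Gamma (-(α:ℂ))‖ * 5) * |s| ^ α := by
            have : α * |s| ≤ 5 * |s| ^ α := by
              calc α * |s| ≤ 1 * |s| ^ α := by
                    apply mul_le_mul h.2.le h1 (abs_nonneg s) zero_le_one
                _ ≤ 5 * |s| ^ α := by linarith
            calc ‖Complex.Gamma (-(α:ℂ))‖ * (α * |s|)
                ≤ ‖Complex.Gamma (-(α:ℂ))‖ * (5 * |s| ^ α) :=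
                  mul_le_mul_of_nonneg_left this hΓ
              _ = (‖Complex.Gamma (-(α:ℂ))‖ * 5) * |s| ^ α := by ring
    · have hcb := abs_cpow_big hα0 hα2.le hs.le
      have h1 : (1:ℝ) ≤ |s| ^ α := Real.one_le_rpow hs.le hα0.le
      have htri : ‖(1 - Complex.I * s) ^ (α:ℂ) - 1‖
          ≤ ‖(1 - Complex.I * s) ^ (α:ℂ)‖ + 1 := by
        calc ‖(1 - Complex.I * s) ^ (α:ℂ) - 1‖
            ≤ ‖(1 - Complex.I * s) ^ (α:ℂ)‖ + ‖(1:ℂ)‖ :=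
              by simpa using norm_sub_le ((1 - Complex.I * (s:ℂ)) ^ (α:ℂ)) 1
          _ = ‖(1 - Complex.I * s) ^ (α:ℂ)‖ + 1 := by simp
      have : ‖(1 - Complex.I * s) ^ (α:ℂ) - 1‖ ≤ 5 * |s| ^ α := by
        calc ‖(1 - Complex.I * s) ^ (α:ℂ) - 1‖
            ≤ ‖(1 - Complex.I * s) ^ (α:ℂ)‖ + 1 := htri
          _ ≤ 2 * |s| ^ α + |s| ^ α := by linarith
          _ ≤ 5 * |s| ^ α := by linarith
      calc ‖Complex.Gamma (-(α:ℂ))‖ * ‖(1 - Complex.I * s) ^ (α:ℂ) - 1‖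
          ≤ ‖Complex.Gamma (-(α:ℂ))‖ * (5 * |s| ^ α) :=
            mul_le_mul_of_nonneg_left this hΓ
        _ = (‖Complex.Gamma (-(α:ℂ))‖ * 5) * |s| ^ α := by ring
  · -- α ∈ (1,2)
    have hif : psiTS α s = Complex.Gamma (-(α:ℂ)) *
        ((1 - Complex.I * (s:ℂ)) ^ (α:ℂ) - 1 + Complex.I * α * s) := by
      unfold psiTS; rw [if_neg (by linarith [h.1])]
    rw [hif, norm_mul]
    have hbody : ‖(1 - Complex.I * (s:ℂ)) ^ (α:ℂ) - 1 + Complex.I * α * s‖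
        ≤ 5 * |s| ^ α := by
      rcases le_or_gt |s| 1 with hs | hs
      · have hB := absB h.1 h.2 s
        have h1 : s^2 ≤ |s| ^ α := by
          calc s^2 = |s| ^ (2:ℝ) := by
                rw [show ((2:ℝ)) = ((2:ℕ):ℝ) by norm_num, Real.rpow_natCast, _root_.sq_abs]
            _ ≤ |s| ^ α := Real.rpow_le_rpow_of_exponent_ge (abs_pos.2 hs0) hs h.2.le
        calc ‖(1 - Complex.I * (s:ℂ)) ^ (α:ℂ) - 1 + Complex.I * α * s‖
            ≤ α * (α - 1) * s^2 := hB
          _ ≤ 2 * s^2 := by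
              have hc : α * (α - 1) ≤ 2 := by nlinarith [h.1, h.2]
              nlinarith [sq_nonneg s, hc]
          _ ≤ 5 * |s| ^ α := by nlinarith [h1, sq_nonneg s, hsα]
      · have hcb := abs_cpow_big hα0 hα2.le hs.le
        have h1 : (1:ℝ) ≤ |s| ^ α := Real.one_le_rpow hs.le hα0.le
        have h2 : |s| ≤ |s| ^ α := by
          calc |s| = |s| ^ (1:ℝ) := (Real.rpow_one _).symm
            _ ≤ |s| ^ α := Real.rpow_le_rpow_of_exponent_le hs.le h.1.le
        have htri : ‖(1 - Complex.I * (s:ℂ)) ^ (α:ℂ) - 1 + Complex.I * α * s‖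
            ≤ ‖(1 - Complex.I * s) ^ (α:ℂ)‖ + 1 + α * |s| := by
          calc ‖(1 - Complex.I * (s:ℂ)) ^ (α:ℂ) - 1 + Complex.I * α * s‖
              ≤ ‖(1 - Complex.I * (s:ℂ)) ^ (α:ℂ) - 1‖
                + ‖Complex.I * α * s‖ := norm_add_le _ _
            _ ≤ (‖(1 - Complex.I * s) ^ (α:ℂ)‖ + 1) + α * |s| := by
                have e1 : ‖(1 - Complex.I * (s:ℂ)) ^ (α:ℂ) - 1‖
                    ≤ ‖(1 - Complex.I * s) ^ (α:ℂ)‖ + 1 := by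
                  calc ‖(1 - Complex.I * (s:ℂ)) ^ (α:ℂ) - 1‖
                      ≤ ‖(1 - Complex.I * s) ^ (α:ℂ)‖ + ‖(1:ℂ)‖ :=
                        by simpa using norm_sub_le ((1 - Complex.I * (s:ℂ)) ^ (α:ℂ)) 1
                    _ = ‖(1 - Complex.I * s) ^ (α:ℂ)‖ + 1 := by simp
                have e2 : ‖Complex.I * (α:ℂ) * s‖ = α * |s| := by
                  simp [Complex.norm_real, abs_of_pos hα0]
                rw [e2]; linarith
            _ = ‖(1 - Complex.I * s) ^ (α:ℂ)‖ + 1 + α * |s| := by ring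
        calc ‖(1 - Complex.I * (s:ℂ)) ^ (α:ℂ) - 1 + Complex.I * α * s‖
            ≤ ‖(1 - Complex.I * s) ^ (α:ℂ)‖ + 1 + α * |s| := htri
          _ ≤ 2 * |s| ^ α + |s| ^ α + 2 * |s| ^ α := by
              have h3 : α * |s| ≤ 2 * |s| ^ α := by
                nlinarith [mul_le_mul_of_nonneg_left h2 hα0.le, hsα]
              linarith [hcb, h1, h3]
          _ = 5 * |s| ^ α := by ring
    calc ‖Complex.Gamma (-(α:ℂ))‖ *
          ‖(1 - Complex.I * (s:ℂ)) ^ (α:ℂ) - 1 + Complex.I * α * s‖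
        ≤ ‖Complex.Gamma (-(α:ℂ))‖ * (5 * |s| ^ α) :=
          mul_le_mul_of_nonneg_left hbody hΓ
      _ = (‖Complex.Gamma (-(α:ℂ))‖ * 5) * |s| ^ α := by ring

theorem stmt12 (α : ℝ) (hα : α ∈ Set.Ioo (0:ℝ) 1 ∪ Set.Ioo (1:ℝ) 2) :
    ∃ z : ℝ, 0 < z ∧ ∀ h : ℝ, 0 < h → ∀ s : ℝ,
      ‖(h:ℂ) * psiTS α (h ^ (-1/α) * s)‖ ≤ z * |s| ^ α := by
  have hα0 : 0 < α := by rcases hα with h | h; exacts [h.1, by linarith [h.1]]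
  have hα2 : α < 2 := by rcases hα with h | h; exacts [by linarith [h.2], h.2]
  have hΓne : Complex.Gamma (-(α:ℂ)) ≠ 0 := by
    apply Complex.Gamma_ne_zero
    intro m hm
    have : (α:ℂ) = (m:ℂ) := by
      have := neg_injective hm
      exact_mod_cast this
    have hm' : α = (m:ℝ) := by exact_mod_cast this
    have h0 : (0:ℝ) < (m:ℝ) := hm' ▸ hα0
    have h2' : ((m:ℝ)) < 2 := hm' ▸ hα2
    have hm0 : 0 < m := by exact_mod_cast h0
    have hm2 : m < 2 := by exact_mod_cast h2'
    have hme : m = 1 := by omega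
    have ha1 : α = 1 := by rw [hm', hme]; norm_num
    rcases hα with h | h
    · linarith [h.2]
    · linarith [h.1]
  have hΓpos : 0 < ‖Complex.Gamma (-(α:ℂ))‖ := norm_pos_iff.mpr hΓne
  refine ⟨‖Complex.Gamma (-(α:ℂ))‖ * 5, by positivity, ?_⟩
  intro h hh s
  set u : ℝ := h ^ (-1/α) * s with hu
  have hhpow : (0:ℝ) < h ^ (-1/α) := Real.rpow_pos_of_pos hh _
  have habsu : |u| = h ^ (-1/α) * |s| := by
    rw [hu, abs_mul, abs_of_pos hhpow]
  have hupow : |u| ^ α = h⁻¹ * |s| ^ α := by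
    rw [habsu, Real.mul_rpow hhpow.le (abs_nonneg s), ← Real.rpow_mul hh.le]
    congr 1
    rw [show -1/α * α = -1 by field_simp, Real.rpow_neg_one]
  calc ‖(h:ℂ) * psiTS α u‖ = h * ‖psiTS α u‖ := by
        rw [norm_mul, Complex.norm_real, Real.norm_eq_abs, abs_of_pos hh]
    _ ≤ h * ((‖Complex.Gamma (-(α:ℂ))‖ * 5) * |u| ^ α) :=
        mul_le_mul_of_nonneg_left (psi_bound α hα u) hh.le
    _ = (‖Complex.Gamma (-(α:ℂ))‖ * 5) * |s| ^ α := by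
        rw [hupow]; field_simp
end

section
/- Let α ∈ (0,2) and define ϑ_α(u) := ∫_0^∞ (e^{ius} − 1 − ius) s^{−α−1} e^{−s} ds for u ∈ ℝ. Then for every u ∈ ℝ, lim_{h → ∞} h · ϑ_α(h^{−1/2} u) = −(u²/2) Γ(2−α). -/
open MeasureTheory Real Set Complex Filter

lemma key_bound (x : ℝ) :
    ‖Complex.exp (Complex.I * x) - 1 - Complex.I * x‖ ≤ 3 * x ^ 2 := by
  have habs : ‖Complex.I * (x:ℂ)‖ = |x| := by
    simp [norm_mul]
  rcases le_or_gt |x| 1 with hx | hx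
  · calc ‖Complex.exp (Complex.I * x) - 1 - Complex.I * x‖
        ≤ ‖Complex.I * (x:ℂ)‖ ^ 2 :=
          Complex.norm_exp_sub_one_sub_id_le (by rw [habs]; exact hx)
      _ = x ^ 2 := by rw [habs]; exact _root_.sq_abs x
      _ ≤ 3 * x ^ 2 := by nlinarith [sq_nonneg x]
  · have h1 : ‖Complex.exp (Complex.I * x)‖ = 1 := by
      rw [mul_comm]; exact Complex.norm_exp_ofReal_mul_I x
    have h2 : ‖Complex.exp (Complex.I * x) - 1 - Complex.I * x‖
        ≤ ‖Complex.exp (Complex.I * x) - 1‖ + ‖Complex.I * x‖ := by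
      simpa [sub_sub] using norm_sub_le (Complex.exp (Complex.I * x) - 1) (Complex.I * x)
    have h3 : ‖Complex.exp (Complex.I * x) - 1‖ ≤ 2 := by
      calc ‖Complex.exp (Complex.I * x) - 1‖
          ≤ ‖Complex.exp (Complex.I * x)‖ + ‖(1:ℂ)‖ := norm_sub_le _ _
        _ = 2 := by rw [h1]; norm_num
    have h4 : (1:ℝ) ≤ |x| := hx.le
    have : ‖Complex.exp (Complex.I * x) - 1 - Complex.I * x‖ ≤ 2 + |x| := by
      rw [habs] at h2; linarith
    nlinarith [_root_.sq_abs x, abs_nonneg x]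

lemma taylor2 {z : ℂ} (hz : ‖z‖ ≤ 1) :
    ‖Complex.exp z - 1 - z - z ^ 2 / 2‖ ≤ ‖z‖ ^ 3 := by
  have h := Complex.exp_bound hz (n := 3) (by norm_num)
  have hsum : (∑ m ∈ Finset.range 3, z ^ m / m.factorial) = 1 + z + z ^ 2 / 2 := by
    simp [Finset.sum_range_succ, Nat.factorial]
  rw [hsum] at h
  have h2 : Complex.exp z - (1 + z + z ^ 2 / 2) = Complex.exp z - 1 - z - z ^ 2 / 2 := by ring
  rw [h2] at h
  calc ‖Complex.exp z - 1 - z - z ^ 2 / 2‖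
      ≤ ‖z‖ ^ 3 * ((3+1 : ℝ) * ((6 * 3 : ℕ) : ℝ)⁻¹) := by exact_mod_cast h
    _ ≤ ‖z‖ ^ 3 := by
        have := pow_nonneg (norm_nonneg z) 3
        nlinarith

/-- `ϑ_α(u) = ∫_0^∞ (e^{ius} − 1 − ius) s^{−α−1} e^{−s} ds`. -/
noncomputable def thetaTS (α : ℝ) (u : ℝ) : ℂ :=
  ∫ s in Set.Ioi (0:ℝ),
    (s ^ (-α - 1) * Real.exp (-s)) •
      (Complex.exp (Complex.I * u * s) - 1 - Complex.I * u * s)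

theorem stmt14 (α : ℝ) (hα : α ∈ Set.Ioo (0:ℝ) 2) (u : ℝ) :
    Filter.Tendsto (fun h : ℝ => (h:ℂ) * thetaTS α (h ^ (-(1:ℝ)/2) * u))
      Filter.atTop (nhds (-(((u ^ 2 / 2 * Real.Gamma (2 - α) : ℝ)) : ℂ))) := by
  obtain ⟨hα0, hα2⟩ := hα
  have h2α : (0:ℝ) < 2 - α := by linarith
  set F : ℝ → ℝ → ℂ := fun h s =>
    (h:ℂ) * ((s ^ (-α - 1) * Real.exp (-s)) •
      (Complex.exp (Complex.I * ((h ^ (-(1:ℝ)/2) * u : ℝ):ℂ) * s) - 1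
        - Complex.I * ((h ^ (-(1:ℝ)/2) * u : ℝ):ℂ) * s)) with hFdef
  set flim : ℝ → ℂ := fun s =>
    (((s ^ (-α - 1) * Real.exp (-s)) * (-(u^2 * s^2)/2) : ℝ) : ℂ) with hflimdef
  -- rpow arithmetic helpers
  have hpow2 : ∀ h : ℝ, 0 < h → h * (h ^ (-(1:ℝ)/2) * h ^ (-(1:ℝ)/2)) = 1 := by
    intro h hh
    rw [← Real.rpow_add hh]
    norm_num [Real.rpow_neg_one]
    exact mul_inv_cancel₀ hh.ne'
  have hexp : (fun h:ℝ => h ^ (-(1:ℝ)/2)) = fun h:ℝ => h ^ (-(1/2:ℝ)) := by norm_num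
  -- Step 1: dominated convergence
  have key : Tendsto (fun h : ℝ => ∫ s in Set.Ioi (0:ℝ), F h s) atTop
      (nhds (∫ s in Set.Ioi (0:ℝ), flim s)) := by
    apply tendsto_integral_filter_of_dominated_convergence
      (bound := fun s => 3 * u^2 * (Real.exp (-s) * s ^ ((2-α) - 1)))
    · -- measurability
      filter_upwards with h
      apply ContinuousOn.aestronglyMeasurable _ measurableSet_Ioi
      apply ContinuousOn.mul continuousOn_const
      apply ContinuousOn.fun_smul
      · exact (continuousOn_id.rpow_const (fun s hs => Or.inl (ne_of_gt hs))).mul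
          (Real.continuous_exp.comp continuous_neg).continuousOn
      · exact (((Complex.continuous_exp.comp (continuous_const.mul Complex.continuous_ofReal)).sub
          continuous_const).sub (continuous_const.mul Complex.continuous_ofReal)).continuousOn
    · -- bound
      filter_upwards [eventually_ge_atTop (1:ℝ)] with h hh
      filter_upwards [ae_restrict_mem measurableSet_Ioi] with s hs
      have hh0 : (0:ℝ) < h := lt_of_lt_of_le one_pos hh
      have hs0 : (0:ℝ) < s := hs
      set v : ℝ := h ^ (-(1:ℝ)/2) * u with hv
      have hc0 : 0 ≤ s ^ (-α - 1) * Real.exp (-s) :=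
        mul_nonneg (Real.rpow_nonneg hs0.le _) (Real.exp_pos _).le
      have hcast : Complex.I * (v:ℂ) * (s:ℂ) = Complex.I * ((v * s : ℝ):ℂ) := by
        push_cast; ring
      have hE : ‖Complex.exp (Complex.I * (v:ℂ) * s) - 1 - Complex.I * (v:ℂ) * s‖
          ≤ 3 * (v * s)^2 := by
        rw [hcast]; exact key_bound (v * s)
      have hnorm : ‖F h s‖ = h * ((s ^ (-α - 1) * Real.exp (-s)) *
          ‖Complex.exp (Complex.I * (v:ℂ) * s) - 1 - Complex.I * (v:ℂ) * s‖) := by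
        rw [hFdef]
        simp only [norm_mul, norm_smul, Real.norm_eq_abs,
          Complex.norm_real, abs_mul]
        rw [← hv, _root_.abs_of_nonneg hh0.le,
          _root_.abs_of_nonneg (Real.rpow_nonneg hs0.le (-α - 1)),
          _root_.abs_of_nonneg (Real.exp_pos (-s)).le]
      have hs2 : s ^ (-α - 1) * s^2 = s ^ ((2-α) - 1) := by
        rw [show (s:ℝ)^2 = s ^ ((2:ℕ):ℝ) by rw [Real.rpow_natCast], ← Real.rpow_add hs0,
          show (-α - 1 + ((2:ℕ):ℝ)) = 2 - α - 1 by push_cast; ring]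
      calc ‖F h s‖ ≤ h * ((s ^ (-α - 1) * Real.exp (-s)) * (3 * (v * s)^2)) := by
            rw [hnorm]; gcongr
        _ = (h * (h ^ (-(1:ℝ)/2) * h ^ (-(1:ℝ)/2))) *
              (3 * u^2 * (Real.exp (-s) * (s ^ (-α - 1) * s^2))) := by rw [hv]; ring
        _ = 3 * u^2 * (Real.exp (-s) * s ^ ((2-α) - 1)) := by
            rw [hpow2 h hh0, hs2]; ring
    · -- integrability of the bound
      exact (Real.GammaIntegral_convergent h2α).const_mul _
    · -- pointwise limit
      filter_upwards [ae_restrict_mem measurableSet_Ioi] with s hs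
      have hs0 : (0:ℝ) < s := hs
      set c : ℝ := s ^ (-α - 1) * Real.exp (-s) with hc
      have hc0 : 0 ≤ c := mul_nonneg (Real.rpow_nonneg hs0.le _) (Real.exp_pos _).le
      rw [tendsto_iff_norm_sub_tendsto_zero]
      apply squeeze_zero' (Filter.Eventually.of_forall fun h => norm_nonneg _)
        (g := fun h : ℝ => (c * (|u| * s)^3) * h ^ (-(1:ℝ)/2))
      · -- eventual bound
        have htend : Tendsto (fun h : ℝ => h ^ (-(1:ℝ)/2) * (|u| * s)) atTop (nhds 0) := by
          simpa [neg_div] using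
            (tendsto_rpow_neg_atTop (by norm_num : (0:ℝ) < 1/2)).mul_const (|u| * s)
        filter_upwards [eventually_ge_atTop (1:ℝ),
          htend.eventually_le_const (by norm_num : (0:ℝ) < 1)] with h hh hz1
        have hh0 : (0:ℝ) < h := lt_of_lt_of_le one_pos hh
        set v : ℝ := h ^ (-(1:ℝ)/2) * u with hv
        set z : ℂ := Complex.I * (v:ℂ) * (s:ℂ) with hzdef
        have habsz : ‖z‖ = h ^ (-(1:ℝ)/2) * (|u| * s) := by
          rw [hzdef]
          simp only [norm_mul, Complex.norm_I, Complex.norm_real, Real.norm_eq_abs, one_mul]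
          rw [hv, abs_mul, _root_.abs_of_nonneg (Real.rpow_nonneg hh0.le _),
            _root_.abs_of_nonneg hs0.le]
          ring
        have hz1' : ‖z‖ ≤ 1 := by rw [habsz]; exact hz1
        have hzsq : (h:ℂ) * (z^2/2) = -((((u^2 * s^2)/2 : ℝ)):ℂ) := by
          have hvv : h * (v * v) = u^2 := by
            rw [hv]
            nlinarith [hpow2 h hh0]
          rw [hzdef]
          rw [show ((h:ℂ)) * ((Complex.I * (v:ℂ) * (s:ℂ))^2/2)
              = Complex.I^2 * ((((h * (v*v) : ℝ)):ℂ) * ((s:ℂ))^2 / 2) by push_cast; ring,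
            Complex.I_sq, hvv]
          push_cast; ring
        have hF' : F h s = (c:ℂ) * ((h:ℂ) * (Complex.exp z - 1 - z)) := by
          simp only [hFdef, hc, hzdef, ← hv]
          push_cast [Complex.real_smul]
          ring
        have hflim' : flim s = (c:ℂ) * ((h:ℂ) * (z^2/2)) := by
          rw [hzsq]
          simp only [hflimdef, hc]
          push_cast; ring
        have h3pow : h * (h ^ (-(1:ℝ)/2))^3 = h ^ (-(1:ℝ)/2) := by
          rw [show ((h ^ (-(1:ℝ)/2))^3 : ℝ) = (h ^ (-(1:ℝ)/2)) ^ ((3:ℕ):ℝ) by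
            rw [Real.rpow_natCast], ← Real.rpow_mul hh0.le]
          nth_rewrite 1 [← Real.rpow_one h]
          rw [← Real.rpow_add hh0]
          norm_num
        calc ‖F h s - flim s‖
            = c * (h * ‖Complex.exp z - 1 - z - z^2/2‖) := by
              rw [hF', hflim',
                show (c:ℂ) * ((h:ℂ) * (Complex.exp z - 1 - z)) - (c:ℂ) * ((h:ℂ) * (z^2/2))
                  = (c:ℂ) * ((h:ℂ) * (Complex.exp z - 1 - z - z^2/2)) by ring]
              simp only [norm_mul, Complex.norm_real, Real.norm_eq_abs]
              rw [_root_.abs_of_nonneg hc0, _root_.abs_of_nonneg hh0.le]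
          _ ≤ c * (h * ‖z‖ ^ 3) := by
              gcongr
              exact taylor2 hz1'
          _ = (c * (|u| * s)^3) * (h * (h ^ (-(1:ℝ)/2))^3) := by rw [habsz]; ring
          _ = (c * (|u| * s)^3) * h ^ (-(1:ℝ)/2) := by rw [h3pow]
      · -- bound tends to zero
        simpa [neg_div] using ((tendsto_rpow_neg_atTop (by norm_num : (0:ℝ) < 1/2)).const_mul
          (c * (|u| * s)^3))
  -- Step 2: identify the limit and the functions
  have hfun : (fun h : ℝ => (h:ℂ) * thetaTS α (h ^ (-(1:ℝ)/2) * u))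
      = fun h : ℝ => ∫ s in Set.Ioi (0:ℝ), F h s := by
    funext h
    rw [hFdef]
    simp only [thetaTS]
    rw [← integral_const_mul]
  have hlim : (∫ s in Set.Ioi (0:ℝ), flim s)
      = -(((u ^ 2 / 2 * Real.Gamma (2 - α) : ℝ)) : ℂ) := by
    simp only [hflimdef]
    rw [show (∫ s in Set.Ioi (0:ℝ), ((s ^ (-α - 1) * Real.exp (-s) * (-(u^2 * s^2)/2) : ℝ) : ℂ))
        = ((∫ s in Set.Ioi (0:ℝ), s ^ (-α - 1) * Real.exp (-s) * (-(u^2 * s^2)/2) : ℝ) : ℂ)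
      from integral_ofReal, ← Complex.ofReal_neg]
    norm_cast
    have : ∀ s ∈ Set.Ioi (0:ℝ),
        (s ^ (-α - 1) * Real.exp (-s)) * (-(u^2 * s^2)/2)
          = (-(u^2)/2) * (Real.exp (-s) * s ^ ((2-α) - 1)) := by
      intro s hs
      have hs0 : (0:ℝ) < s := hs
      have hs2 : s ^ (-α - 1) * s^2 = s ^ ((2-α) - 1) := by
        rw [show (s:ℝ)^2 = s ^ ((2:ℕ):ℝ) by rw [Real.rpow_natCast], ← Real.rpow_add hs0,
          show (-α - 1 + ((2:ℕ):ℝ)) = 2 - α - 1 by push_cast; ring]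
      rw [← hs2]; ring
    rw [setIntegral_congr_fun measurableSet_Ioi this, integral_const_mul,
      ← Real.Gamma_eq_integral h2α]
    ring
  rw [hfun, ← hlim]
  exact key
end

section
/- Let α ∈ (0,1) ∪ (1,2), T > 0, let f : [0,T] → ℝ be measurable with ∫_0^T |f(s)|^α ds < ∞, and let ρ be a σ-finite Borel measure on ℝ∖{0} with ∫ |x|^α ρ(dx) < ∞. Then lim_{h → 0⁺} ∫_0^T ∫ h · ψ_α(h^{−1/α} x f(s)) ρ(dx) ds = ∫_0^T ∫ Γ(−α) |x f(s)|^α (cos(πα/2) − i sin(πα/2)·sgn(x f(s))) ρ(dx) ds, where both iterated integrals converge absolutely. -/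
open MeasureTheory Real Set Complex

namespace StmtAux

lemma ftc_bound_nonneg {β : ℝ} (hβ : 0 < β) {g g' : ℝ → ℂ}
    (hg : ∀ t, HasDerivAt g (g' t) t) (hc : Continuous g')
    (hbd : ∀ t, t ≠ 0 → ‖g' t‖ ≤ β * |t| ^ (β - 1)) {u : ℝ} (hu : 0 ≤ u) :
    ‖g u - g 0‖ ≤ u ^ β := by
  have hftc : ∫ t in (0:ℝ)..u, g' t = g u - g 0 :=
    intervalIntegral.integral_eq_sub_of_hasDerivAt (fun t _ => hg t)
      (hc.intervalIntegrable 0 u)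
  rw [← hftc]
  have hint : IntervalIntegrable (fun t : ℝ => β * t ^ (β - 1)) volume 0 u :=
    (intervalIntegral.intervalIntegrable_rpow' (by linarith)).const_mul β
  have hae : ∀ᵐ t ∂(volume.restrict (Set.uIoc (0:ℝ) u)), ‖g' t‖ ≤ β * t ^ (β - 1) := by
    rw [Set.uIoc_of_le hu]
    filter_upwards [ae_restrict_mem measurableSet_Ioc] with t ht
    have h1 := hbd t (ne_of_gt ht.1)
    rwa [abs_of_pos ht.1] at h1
  refine (intervalIntegral.norm_integral_le_abs_of_norm_le hae hint).trans (le_of_eq ?_)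
  have hval : ∫ t in (0:ℝ)..u, β * t ^ (β - 1) = u ^ β := by
    rw [intervalIntegral.integral_const_mul, integral_rpow (Or.inl (by linarith)),
      show β - 1 + 1 = β by ring, Real.zero_rpow hβ.ne']
    field_simp
    simp
  rw [hval, _root_.abs_of_nonneg (Real.rpow_nonneg hu β)]

lemma ftc_bound {β : ℝ} (hβ : 0 < β) {g g' : ℝ → ℂ}
    (hg : ∀ t, HasDerivAt g (g' t) t) (hc : Continuous g')
    (hbd : ∀ t, t ≠ 0 → ‖g' t‖ ≤ β * |t| ^ (β - 1)) (u : ℝ) :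
    ‖g u - g 0‖ ≤ |u| ^ β := by
  rcases le_or_gt 0 u with hu | hu
  · rw [_root_.abs_of_nonneg hu]; exact ftc_bound_nonneg hβ hg hc hbd hu
  · have hg2 : ∀ t, HasDerivAt (fun t : ℝ => g (-t)) (-g' (-t)) t := by
      intro t
      have h1 : HasDerivAt (g ∘ Neg.neg) ((-1 : ℝ) • g' (-t)) t :=
        HasDerivAt.scomp t (hg (-t)) (hasDerivAt_neg t)
      simpa [Function.comp_def] using h1
    have hc2 : Continuous fun t : ℝ => -g' (-t) := (hc.comp continuous_neg).neg
    have hbd2 : ∀ t : ℝ, t ≠ 0 → ‖-g' (-t)‖ ≤ β * |t| ^ (β - 1) := by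
      intro t ht
      simpa [abs_neg] using hbd (-t) (neg_ne_zero.2 ht)
    have h2 := ftc_bound_nonneg hβ hg2 hc2 hbd2 (u := -u) (by linarith)
    rw [neg_neg, neg_zero] at h2
    rwa [_root_.abs_of_neg hu]

lemma one_sub_slit (z : ℂ) (hz : z.re = 1) : z ∈ slitPlane :=
  Complex.mem_slitPlane_iff.2 (Or.inl (by rw [hz]; norm_num))

lemma one_sub_I_re (s : ℝ) : ((1:ℂ) - I * (s:ℝ)).re = 1 := by simp

lemma one_sub_I_cpow_bound {β : ℝ} (hβ0 : 0 < β) (hβ1 : β < 1) (s : ℝ) :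
    ‖((1:ℂ) - I * (s:ℝ)) ^ ((β:ℝ):ℂ) - 1‖ ≤ |s| ^ β := by
  have hbase : ∀ t : ℝ, HasDerivAt (fun t : ℝ => (1:ℂ) - I * (t:ℝ)) (-I) t := by
    intro t
    have h1 : HasDerivAt (fun t : ℝ => ((t:ℝ):ℂ)) 1 t := (hasDerivAt_id t).ofReal_comp
    simpa using (h1.const_mul I).const_sub 1
  set g' : ℝ → ℂ := fun t => ((β:ℝ):ℂ) * ((1:ℂ) - I * (t:ℝ)) ^ (((β:ℝ):ℂ) - 1) * (-I) with hg'def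
  have hg : ∀ t : ℝ, HasDerivAt (fun t : ℝ => ((1:ℂ) - I * (t:ℝ)) ^ ((β:ℝ):ℂ)) (g' t) t := by
    intro t
    have h1 : HasDerivAt ((fun z : ℂ => z ^ ((β:ℝ):ℂ)) ∘ fun t : ℝ => (1:ℂ) - I * (t:ℝ))
        (((β:ℝ):ℂ) * ((1:ℂ) - I * (t:ℝ)) ^ (((β:ℝ):ℂ) - 1) * (-I)) t :=
      ((Complex.hasStrictDerivAt_cpow_const
        (one_sub_slit _ (one_sub_I_re t))).hasDerivAt).comp t (hbase t)
    exact h1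
  have hcb : Continuous fun t : ℝ => (1:ℂ) - I * (t:ℝ) :=
    continuous_const.sub (continuous_const.mul Complex.continuous_ofReal)
  have hc : Continuous g' := by
    exact (continuous_const.mul
      (hcb.cpow continuous_const (fun t => one_sub_slit _ (one_sub_I_re t)))).mul continuous_const
  have hbd : ∀ t : ℝ, t ≠ 0 → ‖g' t‖ ≤ β * |t| ^ (β - 1) := by
    intro t ht
    have habs : |t| ≤ ‖(1:ℂ) - I * (t:ℝ)‖ := by
      have h1 : ((1:ℂ) - I * (t:ℝ)).im = -t := by simp
      calc |t| = |((1:ℂ) - I * (t:ℝ)).im| := by rw [h1, abs_neg]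
        _ ≤ _ := Complex.abs_im_le_norm _
    have h2 : (‖(1:ℂ) - I * (t:ℝ)‖) ^ (β - 1) ≤ |t| ^ (β - 1) :=
      Real.rpow_le_rpow_of_nonpos (abs_pos.2 ht) habs (by linarith)
    have h4 : ‖((1:ℂ) - I * (t:ℝ)) ^ (((β:ℝ):ℂ) - 1)‖
        = ‖(1:ℂ) - I * (t:ℝ)‖ ^ (β - 1) := by
      rw [show (((β:ℝ):ℂ) - 1) = (((β - 1 : ℝ)):ℂ) by push_cast; ring,
        Complex.norm_cpow_real]
    have h3 : ‖g' t‖ = β * (‖(1:ℂ) - I * (t:ℝ)‖) ^ (β - 1) := by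
      rw [hg'def]
      simp only [norm_mul, norm_neg, Complex.norm_I, Complex.norm_real, Real.norm_eq_abs,
        mul_one, h4, _root_.abs_of_pos hβ0]
    rw [h3]
    exact mul_le_mul_of_nonneg_left h2 hβ0.le
  have := ftc_bound hβ0 hg hc hbd s
  simpa using this

lemma ofReal_mul_cpow {r : ℝ} (hr : 0 < r) {z : ℂ} (hz : z ≠ 0) (w : ℂ) :
    ((r:ℂ) * z) ^ w = (r:ℂ) ^ w * z ^ w := by
  have hr' : (r:ℂ) ≠ 0 := by exact_mod_cast hr.ne'
  rw [Complex.cpow_def_of_ne_zero (mul_ne_zero hr' hz),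
      Complex.cpow_def_of_ne_zero hr', Complex.cpow_def_of_ne_zero hz,
      Complex.log_ofReal_mul hr hz, Complex.ofReal_log hr.le, add_mul, Complex.exp_add]

lemma negI_cpow {α : ℝ} (u : ℝ) (hu : u ≠ 0) :
    (-(I * (u:ℝ))) ^ ((α:ℝ):ℂ) =
      ((|u| ^ α : ℝ) : ℂ) * (((Real.cos (π * α / 2) : ℝ):ℂ) -
        I * ((Real.sin (π * α / 2) : ℝ):ℂ) * ((Real.sign u : ℝ):ℂ)) := by
  rcases hu.lt_or_gt with hneg | hpos
  · have h1 : (-(I * (u:ℝ))) = ((-u : ℝ):ℂ) * I := by push_cast; ring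
    rw [h1, ofReal_mul_cpow (by linarith) Complex.I_ne_zero,
        Complex.cpow_def_of_ne_zero Complex.I_ne_zero, Complex.log_I,
        ← Complex.ofReal_cpow (by linarith : (0:ℝ) ≤ -u)]
    have h2 : ((π:ℝ):ℂ)/2 * I * ((α:ℝ):ℂ) = ((α * (π/2) : ℝ):ℂ) * I := by push_cast; ring
    rw [h2, Complex.exp_mul_I, ← Complex.ofReal_cos, ← Complex.ofReal_sin,
        Real.sign_of_neg hneg, abs_of_neg hneg,
        show α * (π/2) = π * α / 2 by ring]
    push_cast
    ring
  · have h1 : (-(I * (u:ℝ))) = ((u : ℝ):ℂ) * (-I) := by push_cast; ring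
    rw [h1, ofReal_mul_cpow hpos (neg_ne_zero.2 Complex.I_ne_zero),
        Complex.cpow_def_of_ne_zero (neg_ne_zero.2 Complex.I_ne_zero), Complex.log_neg_I,
        ← Complex.ofReal_cpow hpos.le]
    have h2 : -(((π:ℝ):ℂ)/2) * I * ((α:ℝ):ℂ) = ((α * -(π/2) : ℝ):ℂ) * I := by push_cast; ring
    rw [h2, Complex.exp_mul_I, ← Complex.ofReal_cos, ← Complex.ofReal_sin,
        Real.sign_of_pos hpos, abs_of_pos hpos,
        show α * -(π/2) = -(π * α / 2) by ring, Real.cos_neg, Real.sin_neg]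
    push_cast
    ring

lemma abs_sign_le (x : ℝ) : |Real.sign x| ≤ 1 := by
  rcases Real.sign_apply_eq x with h | h | h <;> rw [h] <;> norm_num

lemma measurable_sign : Measurable Real.sign := by
  unfold Real.sign
  refine Measurable.ite ?_ measurable_const (Measurable.ite ?_ measurable_const measurable_const)
  · exact measurableSet_Iio
  · exact measurableSet_Ioi

lemma continuous_psiTS (α : ℝ) : Continuous (psiTS α) := by
  unfold psiTS
  have hb : Continuous fun s : ℝ => ((1:ℂ) - Complex.I * (s:ℝ)) :=
    continuous_const.sub (continuous_const.mul Complex.continuous_ofReal)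
  have h1 : Continuous fun s : ℝ => ((1:ℂ) - Complex.I * (s:ℝ)) ^ (α:ℂ) :=
    hb.cpow continuous_const (fun s => one_sub_slit _ (one_sub_I_re s))
  split_ifs
  · exact continuous_const.mul (h1.sub continuous_const)
  · exact continuous_const.mul ((h1.sub continuous_const).add
      ((continuous_const.mul Complex.continuous_ofReal)))

lemma abs_cpow_sub_one (z : ℂ) (β : ℝ) :
    ‖z ^ ((β:ℂ) - 1)‖ = ‖z‖ ^ (β - 1) := by
  rw [show ((β:ℂ) - 1) = (((β - 1 : ℝ)):ℂ) by push_cast; ring, Complex.norm_cpow_real]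

lemma w_deriv (c : ℝ) (t : ℝ) :
    HasDerivAt (fun t : ℝ => (1:ℂ) - I * ((c * t : ℝ):ℂ)) (-(I * (c:ℝ))) t := by
  have h1 : HasDerivAt (fun t : ℝ => ((c * t : ℝ):ℂ)) ((c:ℝ):ℂ) t := by
    have := ((hasDerivAt_id t).const_mul c).ofReal_comp
    simpa using this
  simpa using (h1.const_mul I).const_sub 1

lemma w_cont (c : ℝ) : Continuous fun t : ℝ => (1:ℂ) - I * ((c * t : ℝ):ℂ) :=
  continuous_const.sub (continuous_const.mul
    (Complex.continuous_ofReal.comp (continuous_const.mul continuous_id)))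

lemma w_abs_ge {c : ℝ} (hc0 : 0 < c) (t : ℝ) :
    c * |t| ≤ ‖(1:ℂ) - I * ((c * t : ℝ):ℂ)‖ := by
  have him : ((1:ℂ) - I * ((c * t : ℝ):ℂ)).im = -(c * t) := by simp
  calc c * |t| = |c * t| := by rw [abs_mul, _root_.abs_of_pos hc0]
    _ = |((1:ℂ) - I * ((c * t : ℝ):ℂ)).im| := by rw [him, abs_neg]
    _ ≤ _ := Complex.abs_im_le_norm _

lemma psi_bound {α : ℝ} (hα : α ∈ Set.Ioo (0:ℝ) 1 ∪ Set.Ioo (1:ℝ) 2) {h : ℝ} (hh : 0 < h)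
    (u : ℝ) :
    ‖(h:ℂ) * psiTS α (h ^ (-1/α) * u)‖ ≤ ‖Complex.Gamma (-(α:ℂ))‖ * |u| ^ α := by
  have hα0 : 0 < α := by rcases hα with h' | h'; exacts [h'.1, lt_trans one_pos h'.1]
  set c : ℝ := h ^ (-1/α) with hcdef
  have hc0 : 0 < c := Real.rpow_pos_of_pos hh _
  have hcα : h * c ^ α = 1 := by
    rw [hcdef, ← Real.rpow_mul hh.le, show -1/α * α = -1 by field_simp, Real.rpow_neg_one]
    field_simp
  have hkey : ∀ t : ℝ, h * (α * c * (c * |t|) ^ (α - 1)) = α * |t| ^ (α - 1) := by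
    intro t
    rw [Real.mul_rpow hc0.le (abs_nonneg t)]
    have hcc : c * c ^ (α - 1) = c ^ α := by
      nth_rewrite 1 [← Real.rpow_one c]
      rw [← Real.rpow_add hc0]
      norm_num
    calc h * (α * c * (c ^ (α - 1) * |t| ^ (α - 1)))
        = (h * c ^ α) * (α * |t| ^ (α - 1)) := by rw [← hcc]; ring
      _ = α * |t| ^ (α - 1) := by rw [hcα, one_mul]
  rcases hα with h1 | h1
  · -- α ∈ (0,1)
    have hα1 : α < 1 := h1.2
    set g : ℝ → ℂ := fun t =>
      (h:ℂ) * (((1:ℂ) - I * ((c * t : ℝ):ℂ)) ^ ((α:ℝ):ℂ) - 1) with hgdef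
    set g' : ℝ → ℂ := fun t =>
      (h:ℂ) * (((α:ℝ):ℂ) * ((1:ℂ) - I * ((c * t : ℝ):ℂ)) ^ (((α:ℝ):ℂ) - 1)
        * (-(I * (c:ℝ)))) with hg'def
    have hg : ∀ t, HasDerivAt g (g' t) t := by
      intro t
      have h2 : HasDerivAt ((fun z : ℂ => z ^ ((α:ℝ):ℂ)) ∘
          (fun t : ℝ => (1:ℂ) - I * ((c * t : ℝ):ℂ)))
          (((α:ℝ):ℂ) * ((1:ℂ) - I * ((c * t : ℝ):ℂ)) ^ (((α:ℝ):ℂ) - 1) * (-(I * (c:ℝ)))) t :=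
        ((Complex.hasStrictDerivAt_cpow_const
          (one_sub_slit _ (one_sub_I_re _))).hasDerivAt).comp t (w_deriv c t)
      exact (h2.sub_const 1).const_mul (h:ℂ)
    have hcont : Continuous g' := by
      exact continuous_const.mul ((continuous_const.mul
        ((w_cont c).cpow continuous_const (fun t => one_sub_slit _ (one_sub_I_re _)))).mul
          continuous_const)
    have hbd : ∀ t, t ≠ 0 → ‖g' t‖ ≤ α * |t| ^ (α - 1) := by
      intro t ht
      have h2 : ‖(1:ℂ) - I * ((c * t : ℝ):ℂ)‖ ^ (α - 1) ≤ (c * |t|) ^ (α - 1) :=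
        Real.rpow_le_rpow_of_nonpos (by positivity) (w_abs_ge hc0 t) (by linarith)
      have h3 : ‖g' t‖ = h * (α * c *
          ‖(1:ℂ) - I * ((c * t : ℝ):ℂ)‖ ^ (α - 1)) := by
        simp only [hg'def, norm_mul, norm_neg, Complex.norm_real, Real.norm_eq_abs,
          Complex.norm_I, abs_cpow_sub_one, _root_.abs_of_pos hh, _root_.abs_of_pos hα0,
          _root_.abs_of_pos hc0]
        ring
      rw [h3, ← hkey t]
      have h4 : α * c * ‖(1:ℂ) - I * ((c * t : ℝ):ℂ)‖ ^ (α - 1)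
          ≤ α * c * (c * |t|) ^ (α - 1) :=
        mul_le_mul_of_nonneg_left h2 (by positivity)
      exact mul_le_mul_of_nonneg_left h4 hh.le
    have hmain := ftc_bound hα0 hg hcont hbd u
    have hg0 : g 0 = 0 := by
      simp [hgdef]
    rw [hg0, sub_zero] at hmain
    have hpsi : (h:ℂ) * psiTS α (c * u) = Complex.Gamma (-(α:ℂ)) * g u := by
      unfold psiTS
      rw [if_pos hα1, hgdef]
      ring
    rw [hpsi, norm_mul]
    exact mul_le_mul_of_nonneg_left hmain (norm_nonneg _)
  · -- α ∈ (1,2)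
    have hα1 : 1 < α := h1.1
    have hβ0 : 0 < α - 1 := by linarith
    have hβ1 : α - 1 < 1 := by linarith [h1.2]
    set g : ℝ → ℂ := fun t =>
      (h:ℂ) * (((1:ℂ) - I * ((c * t : ℝ):ℂ)) ^ ((α:ℝ):ℂ) - 1
        + I * ((α:ℝ):ℂ) * ((c * t : ℝ):ℂ)) with hgdef
    set g' : ℝ → ℂ := fun t =>
      (h:ℂ) * (-(I * ((α * c : ℝ):ℂ)) *
        (((1:ℂ) - I * ((c * t : ℝ):ℂ)) ^ (((α - 1 : ℝ)):ℂ) - 1)) with hg'def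
    have hg : ∀ t, HasDerivAt g (g' t) t := by
      intro t
      have h2 : HasDerivAt ((fun z : ℂ => z ^ ((α:ℝ):ℂ)) ∘
          (fun t : ℝ => (1:ℂ) - I * ((c * t : ℝ):ℂ)))
          (((α:ℝ):ℂ) * ((1:ℂ) - I * ((c * t : ℝ):ℂ)) ^ (((α:ℝ):ℂ) - 1) * (-(I * (c:ℝ)))) t :=
        ((Complex.hasStrictDerivAt_cpow_const
          (one_sub_slit _ (one_sub_I_re _))).hasDerivAt).comp t (w_deriv c t)
      have h3 : HasDerivAt (fun t : ℝ => I * ((α:ℝ):ℂ) * ((c * t : ℝ):ℂ))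
          (I * ((α:ℝ):ℂ) * ((c:ℝ):ℂ)) t := by
        have h4 : HasDerivAt (fun t : ℝ => ((c * t : ℝ):ℂ)) ((c:ℝ):ℂ) t := by
          have := ((hasDerivAt_id t).const_mul c).ofReal_comp
          simpa using this
        simpa [mul_comm, mul_assoc] using h4.const_mul (I * ((α:ℝ):ℂ))
      have h5 := ((h2.sub_const 1).add h3).const_mul (h:ℂ)
      have heq : (h:ℂ) * (((α:ℝ):ℂ) * ((1:ℂ) - I * ((c * t : ℝ):ℂ)) ^ (((α:ℝ):ℂ) - 1)
          * (-(I * (c:ℝ))) + I * ((α:ℝ):ℂ) * ((c:ℝ):ℂ)) = g' t := by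
        rw [hg'def, show (((α:ℝ):ℂ) - 1) = (((α - 1 : ℝ)):ℂ) by push_cast; ring]
        push_cast
        ring
      rw [heq] at h5
      exact h5
    have hcont : Continuous g' := by
      exact continuous_const.mul (continuous_const.mul
        (((w_cont c).cpow continuous_const (fun t => one_sub_slit _ (one_sub_I_re _))).sub
          continuous_const))
    have hbd : ∀ t, t ≠ 0 → ‖g' t‖ ≤ α * |t| ^ (α - 1) := by
      intro t ht
      have h2 : ‖((1:ℂ) - I * ((c * t : ℝ):ℂ)) ^ (((α - 1 : ℝ)):ℂ) - 1‖ ≤ |c * t| ^ (α - 1) :=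
        one_sub_I_cpow_bound hβ0 hβ1 (c * t)
      have h3 : ‖g' t‖ = h * ((α * c) *
          ‖((1:ℂ) - I * ((c * t : ℝ):ℂ)) ^ (((α - 1 : ℝ)):ℂ) - 1‖) := by
        rw [hg'def]
        simp only [norm_mul, norm_neg, Complex.norm_real, Real.norm_eq_abs, Complex.norm_I,
          _root_.abs_of_pos hh, _root_.abs_of_pos (by positivity : (0:ℝ) < α * c),
          _root_.abs_of_pos hα0, _root_.abs_of_pos hc0]
        ring
      rw [h3, ← hkey t]
      have h6 : |c * t| ^ (α - 1) = (c * |t|) ^ (α - 1) := by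
        rw [abs_mul, _root_.abs_of_pos hc0]
      rw [h6] at h2
      have h4 : (α * c) * ‖((1:ℂ) - I * ((c * t : ℝ):ℂ)) ^ (((α - 1 : ℝ)):ℂ) - 1‖
          ≤ (α * c) * (c * |t|) ^ (α - 1) :=
        mul_le_mul_of_nonneg_left h2 (by positivity)
      calc h * ((α * c) * ‖((1:ℂ) - I * ((c * t : ℝ):ℂ)) ^ (((α - 1 : ℝ)):ℂ) - 1‖)
          ≤ h * ((α * c) * (c * |t|) ^ (α - 1)) := mul_le_mul_of_nonneg_left h4 hh.le
        _ = h * (α * c * (c * |t|) ^ (α - 1)) := by ring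
    have hmain := ftc_bound hα0 hg hcont hbd u
    have hg0 : g 0 = 0 := by
      simp [hgdef]
    rw [hg0, sub_zero] at hmain
    have hpsi : (h:ℂ) * psiTS α (c * u) = Complex.Gamma (-(α:ℂ)) * g u := by
      unfold psiTS
      rw [if_neg (by linarith : ¬ α < 1), hgdef]
      ring
    rw [hpsi, norm_mul]
    exact mul_le_mul_of_nonneg_left hmain (norm_nonneg _)

lemma one_sub_I_ne (s : ℝ) : ((1:ℂ) - I * (s:ℝ)) ≠ 0 := by
  intro h0
  have h2 := congrArg Complex.re h0
  simp at h2

lemma psi_tendsto {α : ℝ} (hα : α ∈ Set.Ioo (0:ℝ) 1 ∪ Set.Ioo (1:ℝ) 2) (u : ℝ) :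
    Filter.Tendsto (fun h : ℝ => (h:ℂ) * psiTS α (h ^ (-1/α) * u))
      (nhdsWithin 0 (Set.Ioi 0))
      (nhds (Complex.Gamma (-(α:ℂ)) * ((|u| ^ α : ℝ) : ℂ) *
        (((Real.cos (π * α / 2) : ℝ) : ℂ) -
          I * ((Real.sin (π * α / 2) : ℝ) : ℂ) * ((Real.sign u : ℝ) : ℂ)))) := by
  have hα0 : 0 < α := by rcases hα with h' | h'; exacts [h'.1, lt_trans one_pos h'.1]
  by_cases hu : u = 0
  · subst hu
    have hz : ∀ h : ℝ, (h:ℂ) * psiTS α (h ^ (-1/α) * 0) = 0 := by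
      intro h
      have hp : psiTS α 0 = 0 := by
        unfold psiTS
        split_ifs <;> simp
      simp [hp]
    rw [funext hz]
    have h0 : Complex.Gamma (-(α:ℂ)) * ((|(0:ℝ)| ^ α : ℝ) : ℂ) *
        (((Real.cos (π * α / 2) : ℝ) : ℂ) -
          I * ((Real.sin (π * α / 2) : ℝ) : ℂ) * ((Real.sign (0:ℝ) : ℝ) : ℂ)) = 0 := by
      simp [Real.zero_rpow hα0.ne']
    rw [h0]
    exact tendsto_const_nhds
  · have ha_tend : Filter.Tendsto (fun h : ℝ => h ^ (1/α)) (nhdsWithin 0 (Set.Ioi 0)) (nhds 0) := by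
      have hca := (Real.continuousAt_rpow_const 0 (1/α) (Or.inr (by positivity))).tendsto
      rw [Real.zero_rpow (one_div_ne_zero hα0.ne')] at hca
      exact hca.mono_left nhdsWithin_le_nhds
    have hbase_tend : Filter.Tendsto (fun h : ℝ => ((h ^ (1/α) : ℝ):ℂ) - I * (u:ℝ))
        (nhdsWithin 0 (Set.Ioi 0)) (nhds ((0:ℂ) - I * (u:ℝ))) := by
      have h2 := (Complex.continuous_ofReal.tendsto 0).comp ha_tend
      simpa using h2.sub_const (I * (u:ℝ))
    have hslit : ((0:ℂ) - I * (u:ℝ)) ∈ slitPlane := by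
      refine Complex.mem_slitPlane_iff.2 (Or.inr ?_)
      simpa using hu
    have hcpow_tend : Filter.Tendsto
        (fun h : ℝ => (((h ^ (1/α) : ℝ):ℂ) - I * (u:ℝ)) ^ ((α:ℝ):ℂ))
        (nhdsWithin 0 (Set.Ioi 0)) (nhds (((0:ℂ) - I * (u:ℝ)) ^ ((α:ℝ):ℂ))) :=
      ((continuousAt_cpow_const hslit).tendsto).comp hbase_tend
    have hh_tend : Filter.Tendsto (fun h : ℝ => (h:ℂ)) (nhdsWithin 0 (Set.Ioi 0)) (nhds 0) := by
      simpa using (Complex.continuous_ofReal.tendsto 0).mono_left nhdsWithin_le_nhds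
    rcases hα with h1 | h1
    · -- α ∈ (0,1)
      have hα1 : α < 1 := h1.2
      have hev : (fun h : ℝ => Complex.Gamma (-(α:ℂ)) *
            ((((h ^ (1/α) : ℝ):ℂ) - I * (u:ℝ)) ^ ((α:ℝ):ℂ) - (h:ℂ)))
          =ᶠ[nhdsWithin 0 (Set.Ioi 0)] (fun h : ℝ => (h:ℂ) * psiTS α (h ^ (-1/α) * u)) := by
        filter_upwards [self_mem_nhdsWithin] with h hh
        have hh0 : 0 < h := hh
        have ha0 : 0 < h ^ (1/α) := Real.rpow_pos_of_pos hh0 _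
        have hac : h ^ (1/α) * h ^ (-1/α) = 1 := by
          rw [← Real.rpow_add hh0, show 1/α + -1/α = 0 by ring, Real.rpow_zero]
        have haα : (h ^ (1/α)) ^ α = h := by
          rw [← Real.rpow_mul hh0.le, show 1/α * α = 1 by field_simp, Real.rpow_one]
        have hkey : (h:ℂ) * ((1:ℂ) - I * ((h ^ (-1/α) * u : ℝ):ℂ)) ^ ((α:ℝ):ℂ)
            = (((h ^ (1/α) : ℝ):ℂ) - I * (u:ℝ)) ^ ((α:ℝ):ℂ) := by
          have h2 : (h:ℂ) = ((h ^ (1/α) : ℝ):ℂ) ^ ((α:ℝ):ℂ) := by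
            rw [← Complex.ofReal_cpow ha0.le]
            exact_mod_cast congrArg Complex.ofReal haα.symm
          rw [h2, ← ofReal_mul_cpow ha0 (one_sub_I_ne _)]
          congr 1
          have h3 : ((h ^ (1/α) : ℝ):ℂ) * ((h ^ (-1/α) : ℝ):ℂ) = 1 := by
            exact_mod_cast congrArg Complex.ofReal hac
          push_cast at h3 ⊢
          linear_combination (-(I * (u:ℂ))) * h3
        unfold psiTS
        rw [if_pos hα1, ← hkey]
        ring
      have htend := ((hcpow_tend.sub hh_tend).const_mul (Complex.Gamma (-(α:ℂ))))
      refine Filter.Tendsto.congr' hev ?_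
      have hval : Complex.Gamma (-(α:ℂ)) * ((((0:ℂ) - I * (u:ℝ)) ^ ((α:ℝ):ℂ)) - 0)
          = Complex.Gamma (-(α:ℂ)) * ((|u| ^ α : ℝ) : ℂ) *
            (((Real.cos (π * α / 2) : ℝ) : ℂ) -
              I * ((Real.sin (π * α / 2) : ℝ) : ℂ) * ((Real.sign u : ℝ) : ℂ)) := by
        rw [sub_zero, zero_sub, negI_cpow u hu, ← mul_assoc]
      rw [← hval]
      exact htend
    · -- α ∈ (1,2)
      have hα1 : 1 < α := h1.1
      have hb_tend : Filter.Tendsto (fun h : ℝ => h ^ ((α-1)/α))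
          (nhdsWithin 0 (Set.Ioi 0)) (nhds 0) := by
        have hca := (Real.continuousAt_rpow_const 0 ((α-1)/α) (Or.inr (le_of_lt (div_pos (by linarith) (by linarith))))).tendsto
        rw [Real.zero_rpow (ne_of_gt (div_pos (by linarith) (by linarith)))] at hca
        exact hca.mono_left nhdsWithin_le_nhds
      have hterm_tend : Filter.Tendsto
          (fun h : ℝ => I * ((α:ℝ):ℂ) * (u:ℝ) * ((h ^ ((α-1)/α) : ℝ):ℂ))
          (nhdsWithin 0 (Set.Ioi 0)) (nhds 0) := by
        have h2 := (Complex.continuous_ofReal.tendsto 0).comp hb_tend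
        have h3 := h2.const_mul (I * ((α:ℝ):ℂ) * (u:ℝ))
        simpa using h3
      have hev : (fun h : ℝ => Complex.Gamma (-(α:ℂ)) *
            ((((h ^ (1/α) : ℝ):ℂ) - I * (u:ℝ)) ^ ((α:ℝ):ℂ) - (h:ℂ)
              + I * ((α:ℝ):ℂ) * (u:ℝ) * ((h ^ ((α-1)/α) : ℝ):ℂ)))
          =ᶠ[nhdsWithin 0 (Set.Ioi 0)] (fun h : ℝ => (h:ℂ) * psiTS α (h ^ (-1/α) * u)) := by
        filter_upwards [self_mem_nhdsWithin] with h hh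
        have hh0 : 0 < h := hh
        have ha0 : 0 < h ^ (1/α) := Real.rpow_pos_of_pos hh0 _
        have hac : h ^ (1/α) * h ^ (-1/α) = 1 := by
          rw [← Real.rpow_add hh0, show 1/α + -1/α = 0 by ring, Real.rpow_zero]
        have haα : (h ^ (1/α)) ^ α = h := by
          rw [← Real.rpow_mul hh0.le, show 1/α * α = 1 by field_simp, Real.rpow_one]
        have hkey : (h:ℂ) * ((1:ℂ) - I * ((h ^ (-1/α) * u : ℝ):ℂ)) ^ ((α:ℝ):ℂ)
            = (((h ^ (1/α) : ℝ):ℂ) - I * (u:ℝ)) ^ ((α:ℝ):ℂ) := by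
          have h2 : (h:ℂ) = ((h ^ (1/α) : ℝ):ℂ) ^ ((α:ℝ):ℂ) := by
            rw [← Complex.ofReal_cpow ha0.le]
            exact_mod_cast congrArg Complex.ofReal haα.symm
          rw [h2, ← ofReal_mul_cpow ha0 (one_sub_I_ne _)]
          congr 1
          have h3 : ((h ^ (1/α) : ℝ):ℂ) * ((h ^ (-1/α) : ℝ):ℂ) = 1 := by
            exact_mod_cast congrArg Complex.ofReal hac
          push_cast at h3 ⊢
          linear_combination (-(I * (u:ℂ))) * h3
        have hhc : h * h ^ (-1/α) = h ^ ((α-1)/α) := by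
          rw [show (α-1)/α = 1 + -1/α by field_simp; ring, Real.rpow_add hh0, Real.rpow_one]
        have hterm : (h:ℂ) * (I * ((α:ℝ):ℂ) * ((h ^ (-1/α) * u : ℝ):ℂ))
            = I * ((α:ℝ):ℂ) * (u:ℝ) * ((h ^ ((α-1)/α) : ℝ):ℂ) := by
          rw [← hhc]
          push_cast
          ring
        unfold psiTS
        rw [if_neg (by linarith : ¬ α < 1), ← hkey, ← hterm]
        ring
      have htend := (((hcpow_tend.sub hh_tend).add hterm_tend).const_mul
        (Complex.Gamma (-(α:ℂ))))
      refine Filter.Tendsto.congr' hev ?_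
      have hval : Complex.Gamma (-(α:ℂ)) * ((((0:ℂ) - I * (u:ℝ)) ^ ((α:ℝ):ℂ)) - 0 + 0)
          = Complex.Gamma (-(α:ℂ)) * ((|u| ^ α : ℝ) : ℂ) *
            (((Real.cos (π * α / 2) : ℝ) : ℂ) -
              I * ((Real.sin (π * α / 2) : ℝ) : ℂ) * ((Real.sign u : ℝ) : ℂ)) := by
        rw [add_zero, sub_zero, zero_sub, negI_cpow u hu, ← mul_assoc]
      rw [← hval]
      exact htend

end StmtAux

theorem stmt15 (α T : ℝ) (hα : α ∈ Set.Ioo (0:ℝ) 1 ∪ Set.Ioo (1:ℝ) 2) (hT : 0 < T)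
    (f : ℝ → ℝ) (hf : Measurable f)
    (hfα : IntegrableOn (fun s => |f s| ^ α) (Set.Icc 0 T))
    (ρ : Measure ℝ) [SigmaFinite ρ] (hρ0 : ρ {0} = 0)
    (hρα : Integrable (fun x => |x| ^ α) ρ) :
    (∀ h : ℝ, 0 < h →
      Integrable (fun q : ℝ × ℝ => (h:ℂ) * psiTS α (h ^ (-1/α) * (q.2 * f q.1)))
        ((volume.restrict (Set.Icc 0 T)).prod ρ)) ∧
    Integrable (fun q : ℝ × ℝ =>
        Complex.Gamma (-(α:ℂ)) * ((|q.2 * f q.1| ^ α : ℝ) : ℂ) *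
          (((Real.cos (Real.pi * α / 2) : ℝ) : ℂ) -
            Complex.I * ((Real.sin (Real.pi * α / 2) : ℝ) : ℂ) *
              ((Real.sign (q.2 * f q.1) : ℝ) : ℂ)))
      ((volume.restrict (Set.Icc 0 T)).prod ρ) ∧
    Filter.Tendsto
      (fun h : ℝ => ∫ s in Set.Icc (0:ℝ) T, ∫ x,
        (h:ℂ) * psiTS α (h ^ (-1/α) * (x * f s)) ∂ρ)
      (nhdsWithin 0 (Set.Ioi 0))
      (nhds (∫ s in Set.Icc (0:ℝ) T, ∫ x,
        Complex.Gamma (-(α:ℂ)) * ((|x * f s| ^ α : ℝ) : ℂ) *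
          (((Real.cos (Real.pi * α / 2) : ℝ) : ℂ) -
            Complex.I * ((Real.sin (Real.pi * α / 2) : ℝ) : ℂ) *
              ((Real.sign (x * f s) : ℝ) : ℂ)) ∂ρ)) := by
  have hα0 : 0 < α := by rcases hα with h' | h'; exacts [h'.1, lt_trans one_pos h'.1]
  set μ : Measure (ℝ × ℝ) := (volume.restrict (Set.Icc (0:ℝ) T)).prod ρ with hμdef
  set L : ℝ × ℝ → ℂ := fun q =>
    Complex.Gamma (-(α:ℂ)) * ((|q.2 * f q.1| ^ α : ℝ) : ℂ) *
      (((Real.cos (Real.pi * α / 2) : ℝ) : ℂ) -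
        Complex.I * ((Real.sin (Real.pi * α / 2) : ℝ) : ℂ) *
          ((Real.sign (q.2 * f q.1) : ℝ) : ℂ)) with hLdef
  have hu_meas : Measurable fun q : ℝ × ℝ => q.2 * f q.1 :=
    measurable_snd.mul (hf.comp measurable_fst)
  have hbase : Integrable (fun q : ℝ × ℝ => |q.2 * f q.1| ^ α) μ := by
    have h1 : Integrable (fun q : ℝ × ℝ => |f q.1| ^ α * |q.2| ^ α) μ :=
      Integrable.mul_prod hfα hρα
    refine h1.congr (Filter.Eventually.of_forall fun q => ?_)
    show |f q.1| ^ α * |q.2| ^ α = |q.2 * f q.1| ^ α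
    rw [abs_mul, Real.mul_rpow (abs_nonneg _) (abs_nonneg _), mul_comm]
  have hΓbound : Integrable
      (fun q : ℝ × ℝ => ‖Complex.Gamma (-(α:ℂ))‖ * |q.2 * f q.1| ^ α) μ :=
    hbase.const_mul _
  have part1 : ∀ h : ℝ, 0 < h → Integrable
      (fun q : ℝ × ℝ => (h:ℂ) * psiTS α (h ^ (-1/α) * (q.2 * f q.1))) μ := by
    intro h hh
    refine Integrable.mono' hΓbound ?_
      (Filter.Eventually.of_forall fun q => StmtAux.psi_bound hα hh _)
    exact ((((StmtAux.continuous_psiTS α).measurable).comp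
      (measurable_const.mul hu_meas)).const_mul _).aestronglyMeasurable
  have hLmeas : AEStronglyMeasurable L μ := by
    apply Measurable.aestronglyMeasurable
    apply Measurable.mul
    · apply Measurable.mul measurable_const
      exact Complex.measurable_ofReal.comp
        ((Real.continuous_rpow_const hα0.le).measurable.comp hu_meas.abs)
    · exact measurable_const.sub
        ((Complex.measurable_ofReal.comp (StmtAux.measurable_sign.comp hu_meas)).const_mul _)
  have hLbound : ∀ q : ℝ × ℝ, ‖L q‖ ≤ 2 * ‖Complex.Gamma (-(α:ℂ))‖ * |q.2 * f q.1| ^ α := by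
    intro q
    have hA : ‖((|q.2 * f q.1| ^ α : ℝ):ℂ)‖ = |q.2 * f q.1| ^ α := by
      rw [Complex.norm_real, Real.norm_eq_abs,
        _root_.abs_of_nonneg (Real.rpow_nonneg (abs_nonneg _) _)]
    have hB : ‖(((Real.cos (Real.pi * α / 2) : ℝ) : ℂ) -
        Complex.I * ((Real.sin (Real.pi * α / 2) : ℝ) : ℂ) *
          ((Real.sign (q.2 * f q.1) : ℝ) : ℂ))‖ ≤ 2 := by
      refine (norm_sub_le _ _).trans ?_
      have h1 : ‖((Real.cos (Real.pi * α / 2) : ℝ):ℂ)‖ ≤ 1 := by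
        rw [Complex.norm_real, Real.norm_eq_abs]
        exact Real.abs_cos_le_one _
      have h2 : ‖Complex.I * ((Real.sin (Real.pi * α / 2) : ℝ):ℂ) *
          ((Real.sign (q.2 * f q.1) : ℝ):ℂ)‖ ≤ 1 := by
        rw [norm_mul, norm_mul, Complex.norm_I, one_mul, Complex.norm_real,
          Complex.norm_real, Real.norm_eq_abs, Real.norm_eq_abs]
        exact mul_le_one₀ (Real.abs_sin_le_one _) (abs_nonneg _)
          (StmtAux.abs_sign_le _)
      linarith
    rw [hLdef]
    calc ‖Complex.Gamma (-(α:ℂ)) * ((|q.2 * f q.1| ^ α : ℝ) : ℂ) *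
          (((Real.cos (Real.pi * α / 2) : ℝ) : ℂ) -
            Complex.I * ((Real.sin (Real.pi * α / 2) : ℝ) : ℂ) *
              ((Real.sign (q.2 * f q.1) : ℝ) : ℂ))‖
        = ‖Complex.Gamma (-(α:ℂ))‖ * (|q.2 * f q.1| ^ α) *
          ‖(((Real.cos (Real.pi * α / 2) : ℝ) : ℂ) -
            Complex.I * ((Real.sin (Real.pi * α / 2) : ℝ) : ℂ) *
              ((Real.sign (q.2 * f q.1) : ℝ) : ℂ))‖ := by
          rw [norm_mul, norm_mul, hA]
      _ ≤ ‖Complex.Gamma (-(α:ℂ))‖ * (|q.2 * f q.1| ^ α) * 2 :=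
          mul_le_mul_of_nonneg_left hB (by positivity)
      _ = 2 * ‖Complex.Gamma (-(α:ℂ))‖ * |q.2 * f q.1| ^ α := by ring
  have part2 : Integrable L μ :=
    Integrable.mono' (hbase.const_mul (2 * ‖Complex.Gamma (-(α:ℂ))‖)) hLmeas
      (Filter.Eventually.of_forall hLbound)
  refine ⟨part1, part2, ?_⟩
  have hmain := MeasureTheory.tendsto_integral_filter_of_dominated_convergence
    (μ := μ) (l := nhdsWithin (0:ℝ) (Set.Ioi 0))
    (F := fun h q => (h:ℂ) * psiTS α (h ^ (-1/α) * (q.2 * f q.1))) (f := L)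
    (fun q : ℝ × ℝ => ‖Complex.Gamma (-(α:ℂ))‖ * |q.2 * f q.1| ^ α)
    (Filter.Eventually.of_forall fun h =>
      ((((StmtAux.continuous_psiTS α).measurable).comp
        (measurable_const.mul hu_meas)).const_mul _).aestronglyMeasurable)
    (by
      filter_upwards [self_mem_nhdsWithin] with h hh
      exact Filter.Eventually.of_forall fun q => StmtAux.psi_bound hα hh _)
    hΓbound
    (Filter.Eventually.of_forall fun q => StmtAux.psi_tendsto hα (q.2 * f q.1))
  have hswap : ∫ q, L q ∂μ = ∫ s in Set.Icc (0:ℝ) T, ∫ x, L (s, x) ∂ρ :=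
    MeasureTheory.integral_prod _ part2
  rw [hswap] at hmain
  refine Filter.Tendsto.congr' ?_ hmain
  filter_upwards [self_mem_nhdsWithin] with h hh
  exact MeasureTheory.integral_prod _ (part1 h hh)
end

section
/- Let α ∈ (0,2), H ∈ (1/α, 1/α + 1/2), set G = H − 1/α + 1/2, and fix s > 0. Then lim_{t → ∞} t^{2−2G} (K_{H,α}(t+1, s) − K_{H,α}(t, s)) = c_{H,α} (H − 1/α) s^{1/α − H}; i.e., K_{H,α}(t+1,s) − K_{H,α}(t,s) is asymptotically equivalent to c_{H,α}(H−1/α) s^{1/α−H} t^{2(G−1)} as t → ∞. -/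
open MeasureTheory Real Set

/- Auxiliary lemmas -/

lemma aux_ratio (c : ℝ) :
    Filter.Tendsto (fun t : ℝ => (t + c) / t) Filter.atTop (nhds 1) := by
  have h : Filter.Tendsto (fun t : ℝ => 1 + c * t⁻¹) Filter.atTop (nhds 1) := by
    have h0 : Filter.Tendsto (fun t : ℝ => c * t⁻¹) Filter.atTop (nhds 0) := by
      simpa using (tendsto_inv_atTop_zero (𝕜 := ℝ)).const_mul c
    simpa using tendsto_const_nhds.add h0
  refine h.congr' ?_
  filter_upwards [Filter.eventually_gt_atTop (0:ℝ)] with t ht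
  field_simp

lemma aux_ratio2 (c : ℝ) :
    Filter.Tendsto (fun t : ℝ => t / (t + c)) Filter.atTop (nhds 1) := by
  have h := (aux_ratio (-c)).comp
    (Filter.tendsto_atTop_add_const_right Filter.atTop c Filter.tendsto_id)
  refine h.congr fun t => ?_
  simp [Function.comp]

lemma aux_rpow_lim (f : ℝ → ℝ) (p : ℝ) (hf : Filter.Tendsto f Filter.atTop (nhds 1)) :
    Filter.Tendsto (fun t => f t ^ p) Filter.atTop (nhds 1) := by
  have h := (Real.continuousAt_rpow_const 1 p (Or.inl one_ne_zero)).tendsto.comp hf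
  simpa [Function.comp_def] using h

lemma contg2 (s a b p q : ℝ) (hs : 0 < s) (ha : s < a) :
    ContinuousOn (fun u : ℝ => u ^ p * (u - s) ^ q) (Set.Icc a b) := by
  intro u hu
  have hu0 : u ≠ 0 := ne_of_gt (hs.trans (ha.trans_le hu.1))
  have hus : u - s ≠ 0 := ne_of_gt (sub_pos.mpr (ha.trans_le hu.1))
  exact ((Real.continuousAt_rpow_const u p (Or.inl hu0)).mul
    (((continuous_sub_right s).continuousAt).rpow_const (Or.inl hus))).continuousWithinAt

lemma contg1 (s a b p q : ℝ) (hs : 0 < s) (ha : s ≤ a) (hq : 0 ≤ q) :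
    ContinuousOn (fun u : ℝ => u ^ p * (u - s) ^ q) (Set.Icc a b) := by
  intro u hu
  have hu0 : u ≠ 0 := ne_of_gt (hs.trans_le (ha.trans hu.1))
  exact ((Real.continuousAt_rpow_const u p (Or.inl hu0)).mul
    (((continuous_sub_right s).continuousAt).rpow_const (Or.inr hq))).continuousWithinAt

lemma key (γ s t : ℝ) (_hγ : 0 < γ) (hs : 0 < s) (ht : s + 1 ≤ t) :
    (t+1) ^ γ * (t+1-s) ^ γ - t ^ γ * (t-s) ^ γ
      - γ * ∫ u in t..(t+1), u ^ (γ-1) * (u-s) ^ γ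
    = γ * ∫ u in t..(t+1), u ^ γ * (u-s) ^ (γ-1) := by
  have hst : s < t := lt_of_lt_of_le (by linarith) ht
  have huIcc : Set.uIcc t (t+1) = Set.Icc t (t+1) := Set.uIcc_of_le (by linarith)
  have hint1 : IntervalIntegrable (fun u : ℝ => u ^ (γ-1) * (u-s) ^ γ) volume t (t+1) := by
    rw [intervalIntegrable_iff_integrableOn_Icc_of_le (by linarith)]
    exact (contg2 s t (t+1) (γ-1) γ hs hst).integrableOn_compact isCompact_Icc
  have hint2 : IntervalIntegrable (fun u : ℝ => u ^ γ * (u-s) ^ (γ-1)) volume t (t+1) := by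
    rw [intervalIntegrable_iff_integrableOn_Icc_of_le (by linarith)]
    exact (contg2 s t (t+1) γ (γ-1) hs hst).integrableOn_compact isCompact_Icc
  have hderiv : ∀ u ∈ Set.uIcc t (t+1),
      HasDerivAt (fun u : ℝ => u ^ γ * (u-s) ^ γ)
        (γ * (u ^ (γ-1) * (u-s) ^ γ) + γ * (u ^ γ * (u-s) ^ (γ-1))) u := by
    intro u hu
    rw [huIcc] at hu
    have hu0 : u ≠ 0 := ne_of_gt (hs.trans (hst.trans_le hu.1))
    have hus : u - s ≠ 0 := ne_of_gt (sub_pos.mpr (hst.trans_le hu.1))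
    have h1 : HasDerivAt (fun u : ℝ => u ^ γ) (γ * u ^ (γ-1)) u :=
      Real.hasDerivAt_rpow_const (Or.inl hu0)
    have h2 : HasDerivAt (fun u : ℝ => (u - s) ^ γ) (γ * (u-s) ^ (γ-1)) u := by
      have := (Real.hasDerivAt_rpow_const (x := u - s) (p := γ) (Or.inl hus)).comp u
        ((hasDerivAt_id u).sub_const s)
      simpa [Function.comp_def] using this
    have := h1.mul h2
    refine this.congr_deriv ?_
    ring
  have hftc := intervalIntegral.integral_eq_sub_of_hasDerivAt hderiv
    (((hint1.const_mul γ).add (hint2.const_mul γ)))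
  rw [intervalIntegral.integral_add (hint1.const_mul γ) (hint2.const_mul γ),
    intervalIntegral.integral_const_mul, intervalIntegral.integral_const_mul] at hftc
  linarith [hftc]

theorem stmt18 (α H : ℝ) (hα : α ∈ Set.Ioo (0:ℝ) 2)
    (hH : H ∈ Set.Ioo (1/α) (1/α + 1/2)) (G : ℝ) (hG : G = H - 1/α + 1/2)
    (s : ℝ) (hs : 0 < s) :
    Filter.Tendsto
      (fun t : ℝ => t ^ (2 - 2*G) * (volK H α (t + 1) s - volK H α t s))
      Filter.atTop (nhds (cK H α * (H - 1/α) * s ^ (1/α - H))) := by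
  set γ : ℝ := H - 1/α with hγdef
  have hγ0 : 0 < γ := sub_pos.mpr hH.1
  have hγ2 : γ < 1/2 := by have := hH.2; simp only [hγdef]; linarith
  have hexp : 2 - 2*G = 1 - 2*γ := by rw [hG]; ring
  have hexps : 1/α - H = -γ := by rw [hγdef]; ring
  -- the main squeezed quantity
  have hJ : Filter.Tendsto
      (fun t : ℝ => t ^ (1 - 2*γ) * ∫ u in t..(t+1), u ^ γ * (u-s) ^ (γ-1))
      Filter.atTop (nhds 1) := by
    -- lower bound limit
    have hL : Filter.Tendsto
        (fun t : ℝ => t ^ (1 - 2*γ) * (t ^ γ * (t+1-s) ^ (γ-1)))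
        Filter.atTop (nhds 1) := by
      have h := aux_rpow_lim (fun t : ℝ => t / (t + (1 - s))) (1 - γ) (aux_ratio2 (1 - s))
      refine h.congr' ?_
      filter_upwards [Filter.eventually_gt_atTop (s + 1)] with t ht
      have ht0 : 0 < t := by linarith
      have hts : 0 < t + 1 - s := by linarith
      have h1 : t + (1 - s) = t + 1 - s := by ring
      rw [h1, Real.div_rpow ht0.le hts.le, div_eq_mul_inv, ← Real.rpow_neg hts.le,
        show (1:ℝ) - γ = (1 - 2*γ) + γ by ring, Real.rpow_add ht0,
        show -((1 - 2*γ) + γ) = γ - 1 by ring, mul_assoc]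
    -- upper bound limit
    have hU : Filter.Tendsto
        (fun t : ℝ => t ^ (1 - 2*γ) * ((t+1) ^ γ * (t-s) ^ (γ-1)))
        Filter.atTop (nhds 1) := by
      have h1 := aux_rpow_lim (fun t : ℝ => (t + 1) / t) γ (aux_ratio 1)
      have h2 := aux_rpow_lim (fun t : ℝ => t / (t + (-s))) (1 - γ) (aux_ratio2 (-s))
      have h := h1.mul h2
      rw [one_mul] at h
      refine h.congr' ?_
      filter_upwards [Filter.eventually_gt_atTop (s + 1)] with t ht
      have ht0 : 0 < t := by linarith
      have ht1 : (0:ℝ) < t + 1 := by linarith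
      have hts : 0 < t - s := by linarith
      have h3 : t + (-s) = t - s := by ring
      rw [h3, Real.div_rpow ht1.le ht0.le, Real.div_rpow ht0.le hts.le,
        div_eq_mul_inv, div_eq_mul_inv, ← Real.rpow_neg ht0.le, ← Real.rpow_neg hts.le]
      rw [show ((t+1)^γ * t ^ (-γ)) * (t ^ (1-γ) * (t-s) ^ (-(1-γ)))
          = (t ^ (-γ) * t ^ (1-γ)) * ((t+1) ^ γ * (t-s) ^ (-(1-γ))) by ring,
        ← Real.rpow_add ht0, show -γ + (1 - γ) = 1 - 2*γ by ring,
        show -(1 - γ) = γ - 1 by ring]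
    refine tendsto_of_tendsto_of_tendsto_of_le_of_le' hL hU ?_ ?_
    · filter_upwards [Filter.eventually_gt_atTop (s + 1)] with t ht
      have ht0 : 0 < t := by linarith
      have hts : 0 < t + 1 - s := by linarith
      have hbound : ∀ u ∈ Set.Icc t (t+1),
          t ^ γ * (t+1-s) ^ (γ-1) ≤ u ^ γ * (u-s) ^ (γ-1) := by
        intro u hu
        have hu0 : 0 < u := lt_of_lt_of_le ht0 hu.1
        have hus : 0 < u - s := by have := hu.1; linarith
        have a1 : t ^ γ ≤ u ^ γ := Real.rpow_le_rpow ht0.le hu.1 hγ0.le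
        have a2 : (t+1-s) ^ (γ-1) ≤ (u-s) ^ (γ-1) := by
          refine Real.rpow_le_rpow_of_nonpos hus ?_ (by linarith)
          have := hu.2; linarith
        exact mul_le_mul a1 a2 (Real.rpow_nonneg hts.le _) (Real.rpow_nonneg hu0.le _)
      have hint2 : IntervalIntegrable (fun u : ℝ => u ^ γ * (u-s) ^ (γ-1)) volume t (t+1) := by
        rw [intervalIntegrable_iff_integrableOn_Icc_of_le (by linarith)]
        exact (contg2 s t (t+1) γ (γ-1) hs (by linarith)).integrableOn_compact isCompact_Icc
      have hmono := intervalIntegral.integral_mono_on (by linarith : t ≤ t + 1)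
        (intervalIntegrable_const) hint2 hbound
      rw [intervalIntegral.integral_const] at hmono
      simp only [add_sub_cancel_left, smul_eq_mul, one_mul] at hmono
      have := mul_le_mul_of_nonneg_left hmono (Real.rpow_nonneg ht0.le (1 - 2*γ))
      exact this
    · filter_upwards [Filter.eventually_gt_atTop (s + 1)] with t ht
      have ht0 : 0 < t := by linarith
      have ht1 : (0:ℝ) < t + 1 := by linarith
      have hts : 0 < t - s := by linarith
      have hbound : ∀ u ∈ Set.Icc t (t+1),
          u ^ γ * (u-s) ^ (γ-1) ≤ (t+1) ^ γ * (t-s) ^ (γ-1) := by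
        intro u hu
        have hu0 : 0 < u := lt_of_lt_of_le ht0 hu.1
        have hus : 0 < u - s := by have := hu.1; linarith
        have a1 : u ^ γ ≤ (t+1) ^ γ := Real.rpow_le_rpow hu0.le hu.2 hγ0.le
        have a2 : (u-s) ^ (γ-1) ≤ (t-s) ^ (γ-1) := by
          refine Real.rpow_le_rpow_of_nonpos hts ?_ (by linarith)
          have := hu.1; linarith
        exact mul_le_mul a1 a2 (Real.rpow_nonneg hus.le _) (Real.rpow_nonneg ht1.le _)
      have hint2 : IntervalIntegrable (fun u : ℝ => u ^ γ * (u-s) ^ (γ-1)) volume t (t+1) := by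
        rw [intervalIntegrable_iff_integrableOn_Icc_of_le (by linarith)]
        exact (contg2 s t (t+1) γ (γ-1) hs (by linarith)).integrableOn_compact isCompact_Icc
      have hmono := intervalIntegral.integral_mono_on (by linarith : t ≤ t + 1)
        hint2 (intervalIntegrable_const) hbound
      rw [intervalIntegral.integral_const] at hmono
      simp only [add_sub_cancel_left, smul_eq_mul, one_mul] at hmono
      exact mul_le_mul_of_nonneg_left hmono (Real.rpow_nonneg ht0.le (1 - 2*γ))
  -- conclude
  have hconst := hJ.const_mul (cK H α * γ * s ^ (-γ : ℝ))
  rw [mul_one] at hconst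
  have hfinal : (cK H α * (H - 1/α) * s ^ (1/α - H)) = cK H α * γ * s ^ (-γ : ℝ) := by
    rw [hexps, ← hγdef]
  rw [hfinal]
  refine hconst.congr' ?_
  filter_upwards [Filter.eventually_ge_atTop (s + 1)] with t ht
  have hst : s ≤ t := by linarith
  have hst1 : s ≤ t + 1 := by linarith
  have ht0 : 0 < t := by linarith
  have hsγ : s ^ (1/α - H) = s ^ (-γ : ℝ) := by rw [hexps]
  have hsplit : (∫ u in s..(t+1), u ^ (γ-1) * (u-s) ^ γ)
      = (∫ u in s..t, u ^ (γ-1) * (u-s) ^ γ) + ∫ u in t..(t+1), u ^ (γ-1) * (u-s) ^ γ := by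
    rw [intervalIntegral.integral_add_adjacent_intervals]
    · rw [intervalIntegrable_iff_integrableOn_Icc_of_le hst]
      exact (contg1 s s t (γ-1) γ hs le_rfl hγ0.le).integrableOn_compact isCompact_Icc
    · rw [intervalIntegrable_iff_integrableOn_Icc_of_le (by linarith)]
      exact (contg2 s t (t+1) (γ-1) γ hs (by linarith)).integrableOn_compact isCompact_Icc
  have hdiv : ∀ x : ℝ, 0 ≤ x → (x / s) ^ (γ : ℝ) = x ^ (γ : ℝ) * s ^ (-γ : ℝ) := by
    intro x hx
    rw [Real.div_rpow hx hs.le, div_eq_mul_inv, ← Real.rpow_neg hs.le]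
  have hvol : volK H α (t+1) s - volK H α t s
      = cK H α * s ^ (-γ : ℝ) *
        ((t+1) ^ γ * (t+1-s) ^ γ - t ^ γ * (t-s) ^ γ
          - γ * ∫ u in t..(t+1), u ^ (γ-1) * (u-s) ^ γ) := by
    rw [volK, volK, if_pos ⟨hs, hst1⟩, if_pos ⟨hs, hst⟩]
    simp only [← hγdef, hsγ]
    rw [hsplit, hdiv (t+1) (by linarith), hdiv t ht0.le]
    ring
  rw [hvol, key γ s t hγ0 hs ht, hexp]
  ring
end
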